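/- arXiv:1810.13316 — 8 statements merged into one kernel-verified Lean document; each statement's English description precedes it below -/
import Mathlib

section
/- Let X be a nonempty linear order which is unionwise indecomposable, i.e., for every subset Y ⊆ X, X order-embeds into Y or X order-embeds into X \ Y. Then for all natural numbers m ≥ 1 and n, and for every colouring c : X × Fin(m·n+1) → Fin m, there exist a colour i < m, a subset C ⊆ X into which X order-embeds, and a set D ⊆ {0, …, m·n} with |D| = n+1 such that c(x,d) = i for all x ∈ C and all d ∈ D. -/
/-!
Each column `d ↦ c x d` is a colour of `x` from the finite set `Fin (m * n + 1) → Fin m`, so it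
suffices that every finite colouring of `X` is constant on a copy of `X`: peel off one colour at a
time, keeping either its colour class or the complement, whichever contains a copy of `X`. On that
copy every column is monochromatic, and by pigeonhole `n + 1` of the `m * n + 1` columns share a colour.
-/

def UnionwiseIndecomposable (X : Type*) [LE X] : Prop :=
  ∀ Y : Set X, Nonempty (X ↪o Y) ∨ Nonempty (X ↪o ↥Yᶜ)

namespace UnionwiseIndecomposable

variable {X : Type*} [Preorder X] [Nonempty X] {α : Type*}

theorem exists_orderEmbedding_const_of_mem (hX : UnionwiseIndecomposable X) [DecidableEq α]
    (S : Finset α) : ∀ f : X → α, (∀ x, f x ∈ S) → ∃ (a : α) (g : X ↪o X), ∀ x, f (g x) = a := by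
  induction S using Finset.induction_on with
  | empty =>
    intro f hf
    exact absurd (hf (Classical.arbitrary X)) (Finset.notMem_empty _)
  | insert a S _ ih =>
    intro f hf
    obtain ⟨⟨e⟩⟩ | ⟨⟨e⟩⟩ := hX {x | f x = a}
    · exact ⟨a, e.trans (OrderEmbedding.subtype _), fun x => (e x).2⟩
    · have hS : ∀ x, f (e x) ∈ S := fun x =>
        (Finset.mem_insert.mp (hf (e x))).resolve_left (e x).2
      obtain ⟨b, g, hg⟩ := ih (fun x => f (e x)) hS
      exact ⟨b, g.trans (e.trans (OrderEmbedding.subtype _)), hg⟩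

theorem exists_orderEmbedding_const (hX : UnionwiseIndecomposable X) [Finite α] (f : X → α) :
    ∃ (a : α) (g : X ↪o X), ∀ x, f (g x) = a := by
  classical
  have := Fintype.ofFinite α
  exact hX.exists_orderEmbedding_const_of_mem Finset.univ f fun x => Finset.mem_univ (f x)

end UnionwiseIndecomposable

theorem stmt_1_general (X : Type*) [LinearOrder X] [Nonempty X]
    (hX : ∀ Y : Set X, Nonempty (X ↪o ↥Y) ∨ Nonempty (X ↪o ↥(Yᶜ)))
    (m n : ℕ) (c : X → Fin (m * n + 1) → Fin m) :
    ∃ (i : Fin m) (C : Set X) (D : Set (Fin (m * n + 1))),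
      Nonempty (X ↪o ↥C) ∧ D.ncard = n + 1 ∧ ∀ x ∈ C, ∀ d ∈ D, c x d = i := by
  obtain ⟨col, g, hg⟩ := UnionwiseIndecomposable.exists_orderEmbedding_const hX c
  obtain ⟨i, hi⟩ := Fintype.exists_lt_card_fiber_of_mul_lt_card col (n := n) (by simp)
  obtain ⟨D, hD, hDcard⟩ := Finset.exists_subset_card_eq hi
  refine ⟨i, Set.range g, D, ⟨g.orderIso.toOrderEmbedding⟩, by simpa using hDcard, ?_⟩
  rintro _ ⟨x, rfl⟩ d hd
  rw [hg x]
  exact (Finset.mem_filter.mp (hD hd)).2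

/-- For a nonempty unionwise indecomposable linear order `X`, natural numbers `m ≥ 1` and `n`:
`(φ; mn+1) → (φ; n+1)_m`. -/
theorem stmt_1 (X : Type*) [LinearOrder X] [Nonempty X]
    (hX : ∀ Y : Set X, Nonempty (X ↪o ↥Y) ∨ Nonempty (X ↪o ↥(Yᶜ)))
    (m n : ℕ) (hm : 1 ≤ m) (c : X → Fin (m * n + 1) → Fin m) :
    ∃ (i : Fin m) (C : Set X) (D : Set (Fin (m * n + 1))),
      Nonempty (X ↪o ↥C) ∧ D.ncard = n + 1 ∧ ∀ x ∈ C, ∀ d ∈ D, c x d = i :=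
  stmt_1_general X hX m n c
end

section
/- Let R, T, F and P be linear orders. Suppose that for every colouring c of the two-element subsets of R with colours {0,1,2}, there is either a subset of R into which the lexicographic sum T + T order-embeds all of whose two-element subsets have colour 0, or a subset of R into which the lexicographic sum F + P order-embeds all of whose two-element subsets have colour 1, or a subset of R into which the lexicographic sum P + F order-embeds all of whose two-element subsets have colour 2 (i.e., the ordinary partition relation R → (2T, F+P, P+F)² holds). Then for every set E ⊆ R × R, either there exist subsets A, B ⊆ R, each admitting an order embedding of T, with A × B ⊆ (R × R) \ E, or there exist A ⊆ R admitting an order embedding of F and B ⊆ R admitting an order embedding of P with A × B ⊆ E. -/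
/-!
Colour a pair `x < y` by `1` if `(x, y) ∈ E`, by `2` if `(y, x) ∈ E`, and by `0` otherwise.
A homogeneous copy of `α + β` in `R` splits into a copy `A` of `α` lying entirely below a copy
`B` of `β`. In colour `0` this gives two copies of `T` with `A × B` disjoint from `E`; in
colour `1` copies of `F` below `P` with `A × B ⊆ E`; in colour `2` copies of `P` below `F`
whose transposed product lies in `E`.
-/

open Sum.Lex in
theorem exists_lt_of_sumLex_embedding {α β R : Type*} [LinearOrder α] [LinearOrder β]
    [Preorder R] {S : Set R} (e : α ⊕ₗ β ↪o S) :
    ∃ A B : Set R, Nonempty (α ↪o A) ∧ Nonempty (β ↪o B) ∧ A ⊆ S ∧ B ⊆ S ∧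
      ∀ a ∈ A, ∀ b ∈ B, a < b := by
  have hl : StrictMono fun a : α ↦ (e (toLex (.inl a)) : R) :=
    fun _ _ h ↦ e.strictMono (inl_lt_inl_iff.2 h)
  have hr : StrictMono fun b : β ↦ (e (toLex (.inr b)) : R) :=
    fun _ _ h ↦ e.strictMono (inr_lt_inr_iff.2 h)
  refine ⟨_, _, ⟨(hl.orderIso _).toOrderEmbedding⟩, ⟨(hr.orderIso _).toOrderEmbedding⟩,
    ?_, ?_, ?_⟩
  · rintro _ ⟨a, rfl⟩
    exact Subtype.prop _
  · rintro _ ⟨b, rfl⟩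
    exact Subtype.prop _
  · rintro _ ⟨a, rfl⟩ _ ⟨b, rfl⟩
    exact e.strictMono (inl_lt_inr a b)

section PairColouring

variable {R : Type*} (E : Set (R × R))

open Classical in
noncomputable def pairColouring (x y : R) : Fin 3 :=
  if (x, y) ∈ E then 1 else if (y, x) ∈ E then 2 else 0

variable {E}

theorem notMem_of_pairColouring_eq_zero {x y : R} (h : pairColouring E x y = 0) :
    (x, y) ∉ E := by
  unfold pairColouring at h
  split_ifs at h <;> simp_all

theorem mem_of_pairColouring_eq_one {x y : R} (h : pairColouring E x y = 1) : (x, y) ∈ E := by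
  unfold pairColouring at h
  split_ifs at h <;> simp_all

theorem mem_swap_of_pairColouring_eq_two {x y : R} (h : pairColouring E x y = 2) :
    (y, x) ∈ E := by
  unfold pairColouring at h
  split_ifs at h <;> simp_all

end PairColouring

/-- If the ordinary partition relation `R → (2T, F+P, P+F)²` holds, then the polarised
partition relation `(R;R) → (T F; T P)` holds. Colourings of two-element subsets are
rendered as functions on ordered pairs `x < y`. -/
theorem stmt_3 (R T F P : Type*) [LinearOrder R] [LinearOrder T] [LinearOrder F]
    [LinearOrder P]
    (h : ∀ c : R → R → Fin 3,
      (∃ S : Set R, Nonempty ((T ⊕ₗ T) ↪o ↥S) ∧ ∀ x ∈ S, ∀ y ∈ S, x < y → c x y = 0) ∨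
      (∃ S : Set R, Nonempty ((F ⊕ₗ P) ↪o ↥S) ∧ ∀ x ∈ S, ∀ y ∈ S, x < y → c x y = 1) ∨
      (∃ S : Set R, Nonempty ((P ⊕ₗ F) ↪o ↥S) ∧ ∀ x ∈ S, ∀ y ∈ S, x < y → c x y = 2)) :
    ∀ E : Set (R × R),
      (∃ A B : Set R, Nonempty (T ↪o ↥A) ∧ Nonempty (T ↪o ↥B) ∧
        ∀ a ∈ A, ∀ b ∈ B, (a, b) ∉ E) ∨
      (∃ A B : Set R, Nonempty (F ↪o ↥A) ∧ Nonempty (P ↪o ↥B) ∧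
        ∀ a ∈ A, ∀ b ∈ B, (a, b) ∈ E) := by
  intro E
  rcases h (pairColouring E) with ⟨S, ⟨e⟩, hS⟩ | ⟨S, ⟨e⟩, hS⟩ | ⟨S, ⟨e⟩, hS⟩
  · obtain ⟨A, B, hTA, hTB, hAS, hBS, hAB⟩ := exists_lt_of_sumLex_embedding e
    exact .inl ⟨A, B, hTA, hTB, fun a ha b hb ↦
      notMem_of_pairColouring_eq_zero (hS a (hAS ha) b (hBS hb) (hAB a ha b hb))⟩
  · obtain ⟨A, B, hFA, hPB, hAS, hBS, hAB⟩ := exists_lt_of_sumLex_embedding e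
    exact .inr ⟨A, B, hFA, hPB, fun a ha b hb ↦
      mem_of_pairColouring_eq_one (hS a (hAS ha) b (hBS hb) (hAB a ha b hb))⟩
  · obtain ⟨B, A, hPB, hFA, hBS, hAS, hBA⟩ := exists_lt_of_sumLex_embedding e
    exact .inr ⟨A, B, hFA, hPB, fun a ha b hb ↦
      mem_swap_of_pairColouring_eq_two (hS b (hBS hb) a (hAS ha) (hBA b hb a ha))⟩
end

section
/- For every natural number k and every colouring c : ℚ × ℚ → {0,1}, either there exist subsets C, D ⊆ ℚ, each admitting an order embedding of ℚ, with c constantly 0 on C × D, or there exist C, D ⊆ ℚ with |C| = |D| = k and c constantly 1 on C × D. -/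
/-!
Call the `1`-coloured part of a row or column *sparse* if it is nowhere dense in `ℚ`.

If some restriction of `c` to `F(ℚ) × G(ℚ)`, with `F G : ℚ ↪o ℚ`, has only sparse rows and
columns, a back-and-forth construction (a generic ideal of finite partial isomorphisms) builds a
`0`-coloured copy of `ℚ × ℚ`: each new point only has to avoid finitely many nowhere dense sets.

Otherwise every such restriction has a row (or column) whose `1`-part is dense in some interval,
and a set dense in an interval of `ℚ` contains a copy of `ℚ`. Passing to that copy and to the
rest of the other side adds one point to a finite set of rows (or columns) that is `1`-coloured
against a whole copy of `ℚ`; after `2k` steps one of the two finite sets has `k` points.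
-/

open Set Order

section NowhereDense

variable {X : Type*} [TopologicalSpace X]

lemma IsNowhereDense.union {s t : Set X} (hs : IsNowhereDense s) (ht : IsNowhereDense t) :
    IsNowhereDense (s ∪ t) := by
  rwa [IsNowhereDense, closure_union,
    interior_union_isClosed_of_interior_empty isClosed_closure ht]

lemma IsNowhereDense.biUnion_finset {ι : Type*} {s : Finset ι} {A : ι → Set X}
    (h : ∀ i ∈ s, IsNowhereDense (A i)) : IsNowhereDense (⋃ i ∈ s, A i) := by
  classical
  induction s using Finset.induction_on with
  | empty => simp
  | insert i s _ ih =>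
    rw [Finset.set_biUnion_insert]
    exact (h i (Finset.mem_insert_self i s)).union
      (ih fun j hj => h j (Finset.mem_insert_of_mem hj))

lemma IsNowhereDense.dense_compl {s : Set X} (hs : IsNowhereDense s) : Dense sᶜ :=
  (interior_eq_empty_iff_dense_compl.1 hs).mono (compl_subset_compl.2 subset_closure)

lemma IsOpen.not_isNowhereDense {s : Set X} (hs : IsOpen s) (hne : s.Nonempty) :
    ¬ IsNowhereDense s := fun h =>
  hne.ne_empty (eq_empty_of_subset_empty (h ▸ interior_maximal subset_closure hs))

end NowhereDense

lemma exists_orderEmbedding_forall_mem {s : Set ℚ} (hs : ¬ IsNowhereDense s) :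
    ∃ φ : ℚ ↪o ℚ, ∀ q, φ q ∈ s := by
  obtain ⟨x, hx⟩ := nonempty_iff_ne_empty.2 hs
  obtain ⟨u, v, hxuv, huv⟩ := mem_nhds_iff_exists_Ioo_subset.1 (isOpen_interior.mem_nhds hx)
  have hmeet : ∀ a b, a < b → Ioo a b ⊆ Ioo u v → ∃ z ∈ s, z ∈ Ioo a b := fun a b hab hsub => by
    obtain ⟨m, hm⟩ := exists_between hab
    exact (closure_inter_open_nonempty_iff isOpen_Ioo).1
      ⟨m, interior_subset (huv (hsub hm)), hm⟩
  let D := s ∩ Ioo u v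
  have : DenselyOrdered D := ⟨fun x y hxy => by
    obtain ⟨z, hzs, hz⟩ := hmeet x y hxy (Ioo_subset_Ioo x.2.2.1.le y.2.2.2.le)
    exact ⟨⟨z, hzs, x.2.2.1.trans hz.1, hz.2.trans y.2.2.2⟩, hz⟩⟩
  obtain ⟨z₁, hz₁s, hz₁⟩ := hmeet u v (hxuv.1.trans hxuv.2) subset_rfl
  obtain ⟨z₂, hz₂s, hz₂⟩ := hmeet z₁ v hz₁.2 (Ioo_subset_Ioo_left hz₁.1.le)
  have : Nontrivial D := ⟨⟨z₁, hz₁s, hz₁⟩, ⟨z₂, hz₂s, hz₁.1.trans hz₂.1, hz₂.2⟩,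
    fun h => hz₂.1.ne (congrArg Subtype.val h)⟩
  obtain ⟨φ⟩ := embedding_from_countable_to_dense (α := ℚ) (β := D)
  exact ⟨φ.trans (OrderEmbedding.subtype _), fun q => (φ q).2.1⟩

namespace Order.PartialIso

variable {α β : Type*} [LinearOrder α] [LinearOrder β]

lemma exists_across_mem [TopologicalSpace β] [OrderTopology β] [DenselyOrdered β]
    [NoMinOrder β] [NoMaxOrder β] [Nonempty β] (f : PartialIso α β) {a : α}
    (ha : ∀ b, (a, b) ∉ f.val) {K : Set β} (hK : Dense K) :
    ∃ b ∈ K, ∀ p ∈ f.val, cmp p.1 a = cmp p.2 b := by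
  obtain ⟨b₀, hb₀⟩ := f.exists_across a
  have hopen : IsOpen {b | ∀ p ∈ f.val, cmp p.1 a = cmp p.2 b} := by
    have : {b | ∀ p ∈ f.val, cmp p.1 a = cmp p.2 b} =
        ⋂ p ∈ f.val, {b | cmp p.1 a = cmp p.2 b} := by ext; simp
    rw [this]
    refine isOpen_biInter_finset fun p hp => ?_
    -- `p.1 ≠ a`, so the condition on `b` is a strict inequality
    rcases lt_or_gt_of_ne (fun h : p.1 = a => ha p.2 (h ▸ hp)) with h | h
    · simpa [(cmp_eq_lt_iff _ _).2 h, eq_comm (a := Ordering.lt), cmp_eq_lt_iff] using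
        isOpen_lt' p.2
    · simpa [(cmp_eq_gt_iff _ _).2 h, eq_comm (a := Ordering.gt), cmp_eq_gt_iff] using
        isOpen_gt' p.2
  obtain ⟨b, hb, hbK⟩ := hK.inter_open_nonempty _ hopen ⟨b₀, hb₀⟩
  exact ⟨b, hbK, hb⟩

lemma exists_extend_of_dense [TopologicalSpace β] [OrderTopology β] [DenselyOrdered β]
    [NoMinOrder β] [NoMaxOrder β] [Nonempty β] (f : PartialIso α β) (a : α) {K : Set β}
    (hK : Dense K) :
    ∃ f' : PartialIso α β, f ≤ f' ∧ (∃ b, (a, b) ∈ f'.val) ∧ ∀ p ∈ f'.val, p ∈ f.val ∨ p.2 ∈ K := by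
  by_cases hdef : ∃ b, (a, b) ∈ f.val
  · exact ⟨f, le_rfl, hdef, fun p hp => Or.inl hp⟩
  push Not at hdef
  obtain ⟨b, hbK, hb⟩ := f.exists_across_mem hdef hK
  refine ⟨⟨insert (a, b) f.val, fun p hp q hq => ?_⟩, Finset.subset_insert _ _,
    ⟨b, Finset.mem_insert_self _ _⟩, fun p hp => ?_⟩
  · rw [Finset.mem_insert] at hp hq
    rcases hp with rfl | hp <;> rcases hq with rfl | hq
    · simp only [cmp_self_eq_eq]
    · exact cmp_eq_cmp_symm.1 (hb q hq)
    · exact hb p hp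
    · exact f.prop p hp q hq
  · rcases Finset.mem_insert.1 hp with rfl | hp
    · exact Or.inr hbK
    · exact Or.inl hp

end Order.PartialIso

lemma Order.Ideal.strictMono_of_forall_mem {α β P : Type*} [LinearOrder α] [LinearOrder β]
    [Preorder P] (I : Ideal P) {π : P → PartialIso α β} (hπ : Monotone π) {F : α → β}
    (hF : ∀ a, ∃ x ∈ I, (a, F a) ∈ (π x).val) : StrictMono F := by
  intro a₁ a₂ h
  obtain ⟨x₁, hx₁, h₁⟩ := hF a₁
  obtain ⟨x₂, hx₂, h₂⟩ := hF a₂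
  obtain ⟨y, -, hy₁, hy₂⟩ := I.directed _ hx₁ _ hx₂
  exact (lt_iff_lt_of_cmp_eq_cmp ((π y).prop _ (hπ hy₁ h₁) _ (hπ hy₂ h₂))).1 h

section ZeroHomogeneous

open PartialIso

variable (c : ℚ → ℚ → Fin 2)

/-- Finite approximations of a pair of order embeddings `ℚ ↪o ℚ` whose ranges span a
`0`-coloured rectangle. -/
abbrev ZeroApprox : Type :=
  {fg : PartialIso ℚ ℚ × PartialIso ℚ ℚ // ∀ x ∈ fg.1.val, ∀ y ∈ fg.2.val, c x.2 y.2 = 0}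

variable {c}

lemma ZeroApprox.exists_le_left (hcol : ∀ q, IsNowhereDense {p | c p q = 1})
    (x : ZeroApprox c) (a : ℚ) : ∃ y : ZeroApprox c, (∃ b, (a, b) ∈ y.1.1.val) ∧ x ≤ y := by
  obtain ⟨⟨f, g⟩, hfg⟩ := x
  obtain ⟨f', hff', hdef, hnew⟩ := f.exists_extend_of_dense a
    (IsNowhereDense.biUnion_finset fun (y : ℚ × ℚ) (_ : y ∈ g.val) => hcol y.2).dense_compl
  refine ⟨⟨(f', g), fun x hx y hy => ?_⟩, hdef, hff', le_rfl⟩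
  rcases hnew x hx with hx | hx
  · exact hfg x hx y hy
  · by_contra h
    exact hx (mem_biUnion hy (Fin.eq_one_of_ne_zero _ h))

lemma ZeroApprox.exists_le_right (hrow : ∀ p, IsNowhereDense {q | c p q = 1})
    (x : ZeroApprox c) (a : ℚ) : ∃ y : ZeroApprox c, (∃ b, (a, b) ∈ y.1.2.val) ∧ x ≤ y := by
  obtain ⟨⟨f, g⟩, hfg⟩ := x
  obtain ⟨g', hgg', hdef, hnew⟩ := g.exists_extend_of_dense a
    (IsNowhereDense.biUnion_finset fun (x : ℚ × ℚ) (_ : x ∈ f.val) => hrow x.2).dense_compl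
  refine ⟨⟨(f, g'), fun x hx y hy => ?_⟩, hdef, le_rfl, hgg'⟩
  rcases hnew y hy with hy | hy
  · exact hfg x hx y hy
  · by_contra h
    exact hy (mem_biUnion hx (Fin.eq_one_of_ne_zero _ h))

theorem exists_orderEmbedding_pair_eq_zero (hrow : ∀ p, IsNowhereDense {q | c p q = 1})
    (hcol : ∀ q, IsNowhereDense {p | c p q = 1}) :
    ∃ F G : ℚ ↪o ℚ, ∀ p q, c (F p) (G q) = 0 := by
  let D : ℚ ⊕ ℚ → Cofinal (ZeroApprox c) := Sum.elim
    (fun a => ⟨{y | ∃ b, (a, b) ∈ y.1.1.val}, fun x => ZeroApprox.exists_le_left hcol x a⟩)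
    (fun a => ⟨{y | ∃ b, (a, b) ∈ y.1.2.val}, fun x => ZeroApprox.exists_le_right hrow x a⟩)
  let I := idealOfCofinals (⟨(default, default), by simp [default]⟩ : ZeroApprox c) D
  have hleft (a : ℚ) : ∃ x ∈ I, ∃ b, (a, b) ∈ x.1.1.val :=
    let ⟨x, hxD, hxI⟩ := cofinal_meets_idealOfCofinals _ D (.inl a); ⟨x, hxI, hxD⟩
  have hright (a : ℚ) : ∃ x ∈ I, ∃ b, (a, b) ∈ x.1.2.val :=
    let ⟨x, hxD, hxI⟩ := cofinal_meets_idealOfCofinals _ D (.inr a); ⟨x, hxI, hxD⟩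
  choose xF hxF F hF using hleft
  choose xG hxG G hG using hright
  refine ⟨.ofStrictMono F (I.strictMono_of_forall_mem (π := fun x => x.1.1)
      (fun _ _ h => h.1) fun a => ⟨_, hxF a, hF a⟩),
    .ofStrictMono G (I.strictMono_of_forall_mem (π := fun x => x.1.2)
      (fun _ _ h => h.2) fun a => ⟨_, hxG a, hG a⟩), fun p q => ?_⟩
  obtain ⟨y, -, hy₁, hy₂⟩ := I.directed _ (hxF p) _ (hxG q)
  exact y.2 _ (hy₁.1 (hF p)) _ (hy₂.2 (hG q))

end ZeroHomogeneous

section OneBlocks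

def IsOneBlock (c : ℚ → ℚ → Fin 2) (A : Finset ℚ) (F G : ℚ ↪o ℚ) : Prop :=
  (∀ a ∈ A, ∀ q, c a (G q) = 1) ∧ ∀ p, F p ∉ A

variable {c : ℚ → ℚ → Fin 2} {A : Finset ℚ} {F G : ℚ ↪o ℚ}

lemma IsOneBlock.trans (h : IsOneBlock c A F G) (ψ φ : ℚ ↪o ℚ) :
    IsOneBlock c A (ψ.trans F) (φ.trans G) :=
  ⟨fun a ha q => h.1 a ha (φ q), fun p => h.2 (ψ p)⟩

lemma IsOneBlock.exists_insert (h : IsOneBlock c A F G) {p : ℚ}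
    (hp : ¬ IsNowhereDense {q | c (F p) (G q) = 1}) :
    ∃ ψ φ : ℚ ↪o ℚ, IsOneBlock c (insert (F p) A) (ψ.trans F) (φ.trans G) := by
  obtain ⟨φ, hφ⟩ := exists_orderEmbedding_forall_mem hp
  obtain ⟨ψ, hψ⟩ := exists_orderEmbedding_forall_mem (s := {p}ᶜ)
    (isOpen_compl_singleton.not_isNowhereDense ⟨p + 1, by simp⟩)
  refine ⟨ψ, φ, fun a ha q => ?_, fun q => ?_⟩
  · rcases Finset.mem_insert.1 ha with rfl | ha
    · exact hφ q
    · exact h.1 a ha (φ q)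
  · simpa [F.injective.eq_iff, h.2] using hψ q

lemma exists_isOneBlock_card_add_eq
    (H : ∀ F G : ℚ ↪o ℚ, (∃ p, ¬ IsNowhereDense {q | c (F p) (G q) = 1}) ∨
      ∃ q, ¬ IsNowhereDense {p | c (F p) (G q) = 1}) (m : ℕ) :
    ∃ (A B : Finset ℚ) (F G : ℚ ↪o ℚ),
      A.card + B.card = m ∧ IsOneBlock c A F G ∧ IsOneBlock (flip c) B G F := by
  induction m with
  | zero => exact ⟨∅, ∅, .refl _, .refl _, rfl, ⟨by simp, by simp⟩, ⟨by simp, by simp⟩⟩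
  | succ m ih =>
    obtain ⟨A, B, F, G, hm, hA, hB⟩ := ih
    rcases H F G with ⟨p, hp⟩ | ⟨q, hq⟩
    · obtain ⟨ψ, φ, hA'⟩ := hA.exists_insert hp
      exact ⟨_, B, _, _, by rw [Finset.card_insert_of_notMem (hA.2 p)]; omega, hA', hB.trans φ ψ⟩
    · obtain ⟨φ, ψ, hB'⟩ := hB.exists_insert (p := q) hq
      exact ⟨A, _, _, _, by rw [Finset.card_insert_of_notMem (hB.2 q)]; omega, hA.trans ψ φ, hB'⟩

lemma IsOneBlock.exists_ncard_eq (h : IsOneBlock c A F G) {k : ℕ} (hk : k ≤ A.card) :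
    ∃ C D : Set ℚ, C.ncard = k ∧ D.ncard = k ∧ ∀ x ∈ C, ∀ y ∈ D, c x y = 1 := by
  obtain ⟨C, hCA, hC⟩ := Set.exists_subset_card_eq (s := (A : Set ℚ)) (by simpa using hk)
  obtain ⟨D, hDG, -, hD⟩ := (Set.infinite_range_of_injective G.injective).exists_subset_ncard_eq k
  refine ⟨C, D, hC, hD, fun x hx y hy => ?_⟩
  obtain ⟨q, rfl⟩ := hDG hy
  exact h.1 x (hCA hx) q

end OneBlocks

/-- The polarised partition relation `(η;η) → (η k; η k)` for every natural number `k`. -/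
theorem stmt_4 (k : ℕ) (c : ℚ → ℚ → Fin 2) :
    (∃ C D : Set ℚ, Nonempty (ℚ ↪o ↥C) ∧ Nonempty (ℚ ↪o ↥D) ∧
      ∀ x ∈ C, ∀ y ∈ D, c x y = 0) ∨
    (∃ C D : Set ℚ, C.ncard = k ∧ D.ncard = k ∧ ∀ x ∈ C, ∀ y ∈ D, c x y = 1) := by
  by_cases H : ∃ F G : ℚ ↪o ℚ, (∀ p, IsNowhereDense {q | c (F p) (G q) = 1}) ∧
      ∀ q, IsNowhereDense {p | c (F p) (G q) = 1}
  · obtain ⟨F, G, hrow, hcol⟩ := H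
    obtain ⟨F', G', h0⟩ := exists_orderEmbedding_pair_eq_zero hrow hcol
    refine .inl ⟨range (F'.trans F), range (G'.trans G),
      ⟨(OrderEmbedding.orderIso (f := F'.trans F)).toOrderEmbedding⟩,
      ⟨(OrderEmbedding.orderIso (f := G'.trans G)).toOrderEmbedding⟩, ?_⟩
    rintro _ ⟨p, rfl⟩ _ ⟨q, rfl⟩
    exact h0 p q
  · simp only [not_exists, not_and_or, not_forall] at H
    obtain ⟨A, B, F, G, hcard, hA, hB⟩ := exists_isOneBlock_card_add_eq H (2 * k)
    refine .inr ?_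
    rcases le_or_gt k A.card with hk | hk
    · exact hA.exists_ncard_eq hk
    · obtain ⟨D, C, hD, hC, h1⟩ := hB.exists_ncard_eq (show k ≤ B.card by omega)
      exact ⟨C, D, hC, hD, fun x hx y hy => h1 y hy x hx⟩
end

section
/- For every natural number k: (a) for every colouring c : ℚ × ℕ → {0,1}, either there exist a subset C ⊆ ℚ admitting an order embedding of ℚ and an infinite set D ⊆ ℕ with c constantly 0 on C × D, or there exist C ⊆ ℚ and D ⊆ ℕ with |C| = |D| = k and c constantly 1 on C × D; and (b) for every colouring c : W × ℕ → {0,1}, where W is the set of ordinals below ω^ω, either there exist C ⊆ W of order type ω^ω and an infinite D ⊆ ℕ with c constantly 0 on C × D, or there exist C ⊆ W and D ⊆ ℕ with |C| = |D| = k and c constantly 1 on C × D. -/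
/-!
Suppose `c` has no `k × k` rectangle of colour `1`. Take a finite `T` whose common
`1`-neighbourhood `J` is infinite and which cannot be enlarged keeping it infinite (it has fewer
than `k` elements); then every `x ∉ T` has finitely many `1`-neighbours in `J`. Since every
`k`-set of columns has finitely many common `1`-neighbours, `J` can be thinned greedily to an
increasing sequence on which every `x ∉ T` has at most `k` neighbours of colour `1`. Splitting the
sequence into `k + 1` residue classes, every `x ∉ T` is constantly `0` on one of these infinite
sets, which colours all rows but finitely many with `k + 1` colours.

It remains that `η` and `ω ^ ω` are indivisible. A finite colouring of an interval of a dense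
order has a colour class that is dense in a subinterval, and so contains a copy of `ℚ`. The
ordinal `ω ^ (n + 1)` is the `ω`-sum of blocks of type `ω ^ n`, and `ω ^ ω` the `ω`-sum of blocks
of types `ω ^ j`; colouring each block by a colour of one of its monochromatic copies and passing
to infinitely many blocks of the same colour gives a monochromatic copy of the whole.
-/

open Ordinal Set

section Rectangles

variable {α β : Type*}

def HasRectangle (r : α → β → Prop) (k : ℕ) : Prop :=
  ∃ (C : Set α) (D : Set β), C.ncard = k ∧ D.ncard = k ∧ ∀ x ∈ C, ∀ y ∈ D, r x y

theorem hasRectangle_flip {r : α → β → Prop} {k : ℕ} :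
    HasRectangle (flip r) k ↔ HasRectangle r k :=
  ⟨fun ⟨C, D, hC, hD, h⟩ => ⟨D, C, hD, hC, fun x hx y hy => h y hy x hx⟩,
    fun ⟨C, D, hC, hD, h⟩ => ⟨D, C, hD, hC, fun x hx y hy => h y hy x hx⟩⟩

theorem finite_setOf_forall_of_not_hasRectangle {r : α → β → Prop} {k : ℕ}
    (hr : ¬ HasRectangle r k) {S : Finset β} (hS : S.card = k) :
    {x | ∀ y ∈ S, r x y}.Finite := by
  by_contra hinf
  obtain ⟨T, hT, hTcard⟩ := Set.Infinite.exists_subset_card_eq hinf k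
  exact hr ⟨T, S, by simp [hTcard], by simp [hS], fun x hx => hT hx⟩

theorem exists_finset_maximal_infinite_common [Infinite β] {r : α → β → Prop} {k : ℕ}
    (hr : ¬ HasRectangle r k) :
    ∃ T : Finset α, {y | ∀ x ∈ T, r x y}.Infinite ∧
      ∀ x ∉ T, ({y | r x y} ∩ {y | ∀ x ∈ T, r x y}).Finite := by
  classical
  by_contra! hgrow
  have hcard : ∀ s, ∃ T : Finset α, T.card = s ∧ {y | ∀ x ∈ T, r x y}.Infinite := by
    intro s
    induction s with
    | zero => exact ⟨∅, rfl, by simpa using infinite_univ⟩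
    | succ s ih =>
      obtain ⟨T, hT, hJ⟩ := ih
      obtain ⟨x, hx, hinf⟩ := hgrow T hJ
      refine ⟨insert x T, by rw [Finset.card_insert_of_notMem hx, hT], ?_⟩
      convert hinf using 1
      ext y
      simp
  obtain ⟨T, hT, hJ⟩ := hcard k
  exact hJ (finite_setOf_forall_of_not_hasRectangle (mt hasRectangle_flip.mp hr) hT)

end Rectangles

theorem exists_strictMono_forall_notMem {J : Set ℕ} (hJ : J.Infinite) (Bad : Finset ℕ → Set ℕ)
    (hBad : ∀ E, (Bad E).Finite) :
    ∃ d : ℕ → ℕ, StrictMono d ∧ ∀ n, d n ∈ J ∧ d n ∉ Bad ((Finset.range n).image d) := by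
  classical
  have hnext : ∀ E : Finset ℕ, ∃ x ∈ J, x ∉ Bad E ∧ ∀ e ∈ E, e < x := by
    intro E
    obtain ⟨x, ⟨hxJ, hxBad⟩, hx⟩ := (hJ.sdiff (hBad E)).exists_gt (E.sup id)
    exact ⟨x, hxJ, hxBad, fun e he => (Finset.le_sup (f := id) he).trans_lt hx⟩
  choose next hnextJ hnextBad hnextGt using hnext
  let E : ℕ → Finset ℕ := fun n => Nat.rec ∅ (fun _ E => insert (next E) E) n
  have hE : ∀ n, E n = (Finset.range n).image fun m => next (E m) := by
    intro n
    induction n with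
    | zero => rfl
    | succ n ih => rw [Finset.range_add_one, Finset.image_insert, ← ih]
  refine ⟨fun n => next (E n), strictMono_nat_of_lt_succ fun n => hnextGt _ _ ?_,
    fun n => ⟨hnextJ _, ?_⟩⟩
  · exact Finset.mem_insert_self _ _
  · rw [← hE]
    exact hnextBad _

section Pieces

variable {α : Type*} {r : α → ℕ → Prop} {k : ℕ}

theorem exists_strictMono_card_related_le (hr : ¬ HasRectangle r k) :
    ∃ T : Finset α, ∃ d : ℕ → ℕ, StrictMono d ∧
      ∀ x ∉ T, ∀ S : Finset ℕ, (∀ t ∈ S, r x (d t)) → S.card ≤ k := by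
  classical
  obtain ⟨T, hJ, hfin⟩ := exists_finset_maximal_infinite_common hr
  set J := {y | ∀ x ∈ T, r x y}
  let R : Finset ℕ → Set α := fun E => {x | x ∉ T ∧ ∃ S ⊆ E, S.card = k ∧ ∀ n ∈ S, r x n}
  have hR : ∀ E, (R E).Finite := by
    intro E
    refine ((E.powersetCard k).finite_toSet.biUnion fun S hS =>
      finite_setOf_forall_of_not_hasRectangle hr (Finset.mem_powersetCard.mp hS).2).subset ?_
    rintro x ⟨-, S, hSE, hS, hx⟩
    exact mem_biUnion (Finset.mem_powersetCard.mpr ⟨hSE, hS⟩) hx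
  obtain ⟨d, hd, hdJ⟩ := exists_strictMono_forall_notMem hJ
    (fun E => ⋃ x ∈ R E, {y | r x y} ∩ J) fun E => (hR E).biUnion fun x hx => hfin x hx.1
  refine ⟨T, d, hd, fun x hx S hS => ?_⟩
  by_contra! hlt
  have hne : S.Nonempty := Finset.card_pos.mp (by omega)
  set m := S.max' hne
  -- `x` is related to `k` terms of the sequence before `d m`, so `d m` was chosen unrelated to `x`
  obtain ⟨S', hS'sub, hS'card⟩ :=
    Finset.exists_subset_card_eq (s := (S.erase m).image d) (n := k) (by
      rw [Finset.card_image_of_injective _ hd.injective, Finset.card_erase_of_mem (S.max'_mem hne)]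
      omega)
  have hxR : x ∈ R ((Finset.range m).image d) := by
    refine ⟨hx, S', hS'sub.trans (Finset.image_subset_image fun t ht => ?_), hS'card, ?_⟩
    · exact Finset.mem_range.mpr (lt_of_le_of_ne (S.le_max' t (Finset.mem_of_mem_erase ht))
        (Finset.ne_of_mem_erase ht))
    · intro n hn
      obtain ⟨t, ht, rfl⟩ := Finset.mem_image.mp (hS'sub hn)
      exact hS t (Finset.mem_of_mem_erase ht)
  exact (hdJ m).2 (mem_biUnion hxR ⟨hS m (S.max'_mem hne), (hdJ m).1⟩)

theorem exists_infinite_pieces_of_not_hasRectangle (hr : ¬ HasRectangle r k) :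
    ∃ Y : Set α, Y.Finite ∧ ∃ P : Fin (k + 1) → Set ℕ, (∀ i, (P i).Infinite) ∧
      ∀ x ∉ Y, ∃ i, ∀ n ∈ P i, ¬ r x n := by
  classical
  obtain ⟨T, d, hd, hbound⟩ := exists_strictMono_card_related_le hr
  refine ⟨T, T.finite_toSet, fun i => d '' {t | t % (k + 1) = i}, fun i => ?_, fun x hx => ?_⟩
  · exact (Nat.frequently_atTop_iff_infinite.mp (Nat.frequently_mod_eq i.isLt)).image
      hd.injective.injOn
  · by_contra! hhit
    choose n hn hrn using hhit
    choose t ht hdt using hn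
    have ht_inj : Function.Injective t := fun i j hij => Fin.ext (by rw [← ht i, ← ht j, hij])
    have := hbound x hx (Finset.univ.image t) (by simpa [hdt] using hrn)
    rw [Finset.card_image_of_injective _ ht_inj, Finset.card_univ, Fintype.card_fin] at this
    omega

end Pieces

section DenseOrder

variable {α : Type*} [LinearOrder α] [DenselyOrdered α]

theorem nonempty_orderEmbedding_rat_of_dense {s : Set α} {a b : α} (hab : a < b)
    (hs : ∀ x ∈ Ioo a b, ∀ y ∈ Ioo a b, x < y → ∃ z ∈ s, x < z ∧ z < y) :
    Nonempty (ℚ ↪o ↥(s ∩ Ioo a b)) := by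
  have : DenselyOrdered ↥(s ∩ Ioo a b) := ⟨fun x y hxy => by
    obtain ⟨z, hz, hxz, hzy⟩ := hs x x.2.2 y y.2.2 hxy
    exact ⟨⟨z, hz, x.2.2.1.trans hxz, hzy.trans y.2.2.2⟩, hxz, hzy⟩⟩
  have : Nontrivial ↥(s ∩ Ioo a b) := by
    obtain ⟨p, hap, hpb⟩ := exists_between hab
    obtain ⟨q, hpq, hqb⟩ := exists_between hpb
    obtain ⟨z, hz, hpz, hzq⟩ := hs p ⟨hap, hpb⟩ q ⟨hap.trans hpq, hqb⟩ hpq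
    obtain ⟨z', hz', hzz', hz'q⟩ :=
      hs z ⟨hap.trans hpz, hzq.trans hqb⟩ q ⟨hap.trans hpq, hqb⟩ hzq
    exact ⟨⟨z, hz, hap.trans hpz, hzq.trans hqb⟩, ⟨z', hz', hap.trans (hpz.trans hzz'),
      hz'q.trans hqb⟩, fun h => hzz'.ne (congrArg Subtype.val h)⟩
  exact Order.embedding_from_countable_to_dense ℚ _

theorem exists_dense_of_Ioo_subset_biUnion {ι : Type*} (F : ι → Set α) (s : Finset ι) {a b : α}
    (hab : a < b) (hcover : Ioo a b ⊆ ⋃ i ∈ s, F i) :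
    ∃ i ∈ s, ∃ u v, u < v ∧ ∀ x ∈ Ioo u v, ∀ y ∈ Ioo u v, x < y → ∃ z ∈ F i, x < z ∧ z < y := by
  classical
  induction s using Finset.induction_on generalizing a b with
  | empty => simpa using hcover (exists_between hab).choose_spec
  | insert j s hj ih =>
    by_cases hdense : ∀ x ∈ Ioo a b, ∀ y ∈ Ioo a b, x < y → ∃ z ∈ F j, x < z ∧ z < y
    · exact ⟨j, Finset.mem_insert_self j s, a, b, hab, hdense⟩
    push Not at hdense
    obtain ⟨x, hx, y, hy, hxy, hgap⟩ := hdense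
    obtain ⟨i, hi, hrest⟩ := ih hxy fun z hz => by
      have hz' := hcover ⟨hx.1.trans hz.1, hz.2.trans hy.2⟩
      rw [Finset.set_biUnion_insert] at hz'
      exact hz'.resolve_left fun hzj => (hgap z hzj hz.1).not_gt hz.2
    exact ⟨i, Finset.mem_insert_of_mem hi, hrest⟩

theorem exists_orderEmbedding_rat_of_Ioo_subset_iUnion {ι : Type*} [Finite ι] (F : ι → Set α)
    {a b : α} (hab : a < b) (hcover : Ioo a b ⊆ ⋃ i, F i) :
    ∃ i u v, Nonempty (ℚ ↪o ↥(F i ∩ Ioo u v)) := by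
  have := Fintype.ofFinite ι
  obtain ⟨i, -, u, v, huv, hdense⟩ :=
    exists_dense_of_Ioo_subset_biUnion F Finset.univ hab (by simpa using hcover)
  exact ⟨i, u, v, nonempty_orderEmbedding_rat_of_dense huv hdense⟩

end DenseOrder

theorem exists_strictMono_forall_eq {ι : Type*} [Finite ι] (I : ℕ → ι) :
    ∃ i, ∃ N : ℕ → ℕ, StrictMono N ∧ ∀ t, I (N t) = i := by
  obtain ⟨i, hi⟩ := Finite.exists_infinite_fiber I
  exact ⟨i, Nat.exists_strictMono_subsequence fun n =>
    ((infinite_coe_iff.mp hi).exists_gt n).imp fun _ h => ⟨h.2, h.1⟩⟩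

universe u v

namespace Ordinal

theorem mul_natCast_add_lt_mul {w y c : Ordinal} {s : ℕ} (hy : y < w) (hs : (s : Ordinal) < c) :
    w * s + y < w * c :=
  calc w * s + y < w * s + w := add_lt_add_right hy _
    _ = w * (s + 1) := (mul_add_one _ _).symm
    _ ≤ w * c := mul_le_mul_right (Order.add_one_le_of_lt hs) _

theorem pow_add_lt_pow {m m' : ℕ} {z : Ordinal} (hz : z < ω ^ m) (hm : m < m') :
    ω ^ m + z < ω ^ m' := by
  have hprincipal := isPrincipal_add_omega0_opow (m' : Ordinal)
  rw [opow_natCast] at hprincipal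
  have hpow : ω ^ m < ω ^ m' := pow_lt_pow_right₀ one_lt_omega0 hm
  exact hprincipal hpow (hz.trans hpow)

theorem pow_lt_opow_omega0 (n : ℕ) : ω ^ n < ω ^ ω := by
  rw [← opow_natCast]
  exact (opow_lt_opow_iff_right one_lt_omega0).mpr (natCast_lt_omega0 n)

theorem exists_lt_pow_of_lt_opow_omega0 {x : Ordinal} (hx : x < ω ^ ω) : ∃ n : ℕ, x < ω ^ n := by
  obtain ⟨c, hc, hxc⟩ := (lt_opow_of_isSuccLimit omega0_ne_zero isSuccLimit_omega0).mp hx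
  obtain ⟨n, rfl⟩ := lt_omega0.mp hc
  exact ⟨n, by rwa [← opow_natCast]⟩

theorem exists_strictMonoOn_pow_nat {ι : Type*} [Finite ι] (n : ℕ) (F : ι → Set Ordinal.{u})
    (hF : Iio (ω ^ n) ⊆ ⋃ i, F i) :
    ∃ i, ∃ g : Ordinal.{v} → Ordinal.{u}, StrictMonoOn g (Iio (ω ^ n)) ∧
      ∀ x < ω ^ n, g x < ω ^ n ∧ g x ∈ F i := by
  induction n generalizing F with
  | zero =>
    obtain ⟨i, hi⟩ := mem_iUnion.mp (hF (by simp : (0 : Ordinal) ∈ Iio (ω ^ 0)))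
    refine ⟨i, fun _ => 0, fun x _ y hy hxy => ?_, fun _ _ => ⟨by simp, hi⟩⟩
    rw [mem_Iio, pow_zero, Order.lt_one_iff] at hy
    exact (not_lt_zero (hy ▸ hxy)).elim
  | succ n ih =>
    have hw : (ω ^ n : Ordinal.{v}) ≠ 0 := pow_ne_zero _ omega0_ne_zero
    have hblock : ∀ t : ℕ, Iio (ω ^ n) ⊆ ⋃ i, (fun y => ω ^ n * t + y) ⁻¹' F i :=
      fun t y hy => by
        rw [← preimage_iUnion]
        exact hF (by rw [mem_Iio, pow_succ]; exact mul_natCast_add_lt_mul hy (natCast_lt_omega0 t))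
    choose I g hg hgF using fun t => ih _ (hblock t)
    obtain ⟨i, N, hN, hNi⟩ := exists_strictMono_forall_eq I
    have hkey : ∀ x : Ordinal.{v}, ∃ t : ℕ, x < ω ^ (n + 1) → x / ω ^ n = t := fun x => by
      by_cases hx : x < ω ^ (n + 1)
      · rw [pow_succ, lt_mul_iff_div_lt hw] at hx
        exact (lt_omega0.mp hx).imp fun _ ht _ => ht
      · exact ⟨0, fun h => (hx h).elim⟩
    choose key hkey using hkey
    -- the block `[ω ^ n * t, ω ^ n * (t + 1))` is sent into the block with index `N t`
    refine ⟨i, fun x => ω ^ n * N (key x) + g (N (key x)) (x % ω ^ n), fun x hx y hy hxy => ?_,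
      fun x hx => ⟨?_, ?_⟩⟩
    · have hmod : ∀ z, z % ω ^ n ∈ Iio (ω ^ n) := fun z => mod_lt z hw
      rcases (div_le_left hxy.le (ω ^ n)).eq_or_lt with heq | hlt
      · have hk : key x = key y := by exact_mod_cast (hkey x hx).symm.trans (heq.trans (hkey y hy))
        dsimp only
        rw [hk]
        refine add_lt_add_right (hg _ (hmod x) (hmod y) ?_) _
        have hxd := div_add_mod x (ω ^ n)
        have hyd := div_add_mod y (ω ^ n)
        rw [heq] at hxd
        exact (add_lt_add_iff_left _).mp (by rw [hxd, hyd]; exact hxy)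
      · have hk : key x < key y := by
          rw [hkey x hx, hkey y hy] at hlt
          exact_mod_cast hlt
        calc _ < ω ^ n * (N (key y) : Ordinal) :=
              mul_natCast_add_lt_mul (hgF _ _ (hmod x)).1 (by exact_mod_cast hN hk)
          _ ≤ _ := le_self_add
    · rw [pow_succ]
      exact mul_natCast_add_lt_mul (hgF _ _ (mod_lt x hw)).1 (natCast_lt_omega0 _)
    · simpa [hNi] using (hgF (N (key x)) _ (mod_lt x hw)).2

theorem exists_strictMono_opow_omega0 {ι : Type*} [Finite ι] (F : ι → Set Ordinal.{u})
    (hF : Iio (ω ^ ω) ⊆ ⋃ i, F i) :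
    ∃ i, ∃ g : Iio (ω ^ ω : Ordinal.{v}) → Ordinal.{u}, StrictMono g ∧
      ∀ x, g x < ω ^ ω ∧ g x ∈ F i := by
  have hblock : ∀ j : ℕ, Iio (ω ^ j) ⊆ ⋃ i, (fun y => ω ^ j + y) ⁻¹' F i := fun j y hy => by
    rw [← preimage_iUnion]
    exact hF (isPrincipal_add_omega0_opow ω (pow_lt_opow_omega0 j)
      (hy.trans (pow_lt_opow_omega0 j)))
  choose I g hg hgF using fun j => exists_strictMonoOn_pow_nat.{u, v} j _ (hblock j)
  obtain ⟨i, N, hN, hNi⟩ := exists_strictMono_forall_eq I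
  have hkey := fun x : Iio (ω ^ ω : Ordinal.{v}) => exists_lt_pow_of_lt_opow_omega0 x.2
  have hlt_N : ∀ x : Iio (ω ^ ω : Ordinal.{v}), (x : Ordinal) < ω ^ N (Nat.find (hkey x)) :=
    fun x => (Nat.find_spec (hkey x)).trans_le (pow_le_pow_right₀ one_lt_omega0.le hN.le_apply)
  -- `x` is sent into the block `[ω ^ m, ω ^ m * 2)` with `m = N j`, `j` least with `x < ω ^ j`
  refine ⟨i, fun x => ω ^ N (Nat.find (hkey x)) + g (N (Nat.find (hkey x))) x,
    fun x y hxy => ?_, fun x => ⟨?_, ?_⟩⟩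
  · have hle : Nat.find (hkey x) ≤ Nat.find (hkey y) :=
      Nat.find_mono fun j hj => (show (x : Ordinal) < y from hxy).trans hj
    rcases hle.eq_or_lt with heq | hlt
    · dsimp only
      rw [heq]
      exact add_lt_add_right (hg _ (heq ▸ hlt_N x) (hlt_N y) hxy) _
    · calc _ < ω ^ N (Nat.find (hkey y)) := pow_add_lt_pow (hgF _ _ (hlt_N x)).1 (hN hlt)
        _ ≤ _ := le_self_add
  · exact isPrincipal_add_omega0_opow ω (pow_lt_opow_omega0 _)
      ((hgF _ _ (hlt_N x)).1.trans (pow_lt_opow_omega0 _))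
  · simpa [hNi] using (hgF (N (Nat.find (hkey x))) _ (hlt_N x)).2

end Ordinal

theorem rat_zero_rectangle_or_hasRectangle (k : ℕ) (c : ℚ → ℕ → Fin 2) :
    (∃ (C : Set ℚ) (D : Set ℕ), Nonempty (ℚ ↪o ↥C) ∧ D.Infinite ∧
      ∀ x ∈ C, ∀ d ∈ D, c x d = 0) ∨ HasRectangle (fun x d => c x d = 1) k := by
  refine or_iff_not_imp_right.mpr fun hr => ?_
  obtain ⟨Y, hY, P, hP, hcov⟩ := exists_infinite_pieces_of_not_hasRectangle hr
  obtain ⟨a, ha⟩ := hY.bddAbove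
  obtain ⟨i, u, v, he⟩ := exists_orderEmbedding_rat_of_Ioo_subset_iUnion
    (fun i => {x | ∀ n ∈ P i, ¬ c x n = 1}) (lt_add_one a) fun x hx =>
      mem_iUnion.mpr (hcov x fun hxY => (ha hxY).not_gt hx.1)
  exact ⟨_, P i, he, hP i, fun x hx d hd =>
    not_not.mp ((Fin.eq_one_of_ne_zero _).mt (hx.1 d hd))⟩

theorem opow_omega0_zero_rectangle_or_hasRectangle (k : ℕ)
    (c : Iio (ω ^ ω : Ordinal.{u}) → ℕ → Fin 2) :
    (∃ (C : Set (Iio (ω ^ ω : Ordinal.{u}))) (D : Set ℕ),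
      Nonempty (C ≃o Iio (ω ^ ω : Ordinal.{v})) ∧ D.Infinite ∧ ∀ x ∈ C, ∀ d ∈ D, c x d = 0) ∨
      HasRectangle (fun x d => c x d = 1) k := by
  refine or_iff_not_imp_right.mpr fun hr => ?_
  obtain ⟨Y, hY, P, hP, hcov⟩ := exists_infinite_pieces_of_not_hasRectangle hr
  have : Nonempty (Iio (ω ^ ω : Ordinal.{u})) := ⟨⟨0, opow_pos _ omega0_pos⟩⟩
  obtain ⟨y, hy⟩ := hY.bddAbove
  have hshift : ∀ z < ω ^ ω, y.1 + 1 + z < ω ^ ω := fun z hz =>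
    isPrincipal_add_omega0_opow ω
      (isPrincipal_add_omega0_opow ω y.2 (by simp)) hz
  obtain ⟨i, g, hg, hgF⟩ := exists_strictMono_opow_omega0.{u, v}
    (fun i => {z | ∀ h : y.1 + 1 + z < ω ^ ω, ∀ n ∈ P i, ¬ c ⟨_, h⟩ n = 1}) fun z hz => by
      have hnotY : (⟨_, hshift z hz⟩ : Iio (ω ^ ω)) ∉ Y := fun hzY =>
        (hy hzY).not_gt ((lt_add_one y.1).trans_le le_self_add)
      obtain ⟨i, hi⟩ := hcov _ hnotY
      exact mem_iUnion.mpr ⟨i, fun _ => hi⟩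
  let φ : Iio (ω ^ ω : Ordinal.{v}) → Iio (ω ^ ω : Ordinal.{u}) :=
    fun x => ⟨_, hshift _ (hgF x).1⟩
  have hφ : StrictMono φ := fun x y hxy => add_lt_add_right (hg hxy) _
  refine ⟨range φ, P i, ⟨(hφ.orderIso φ).symm⟩, hP i, ?_⟩
  rintro _ ⟨x, rfl⟩ d hd
  exact not_not.mp ((Fin.eq_one_of_ne_zero _).mt ((hgF x).2 _ d hd))

/-- The polarised partition relations `(η; ω) → (η k; ω k)` and
`(ω^ω; ω) → (ω^ω k; ω k)` for every natural number `k`. -/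
theorem stmt_6 (k : ℕ) :
    (∀ c : ℚ → ℕ → Fin 2,
      (∃ (C : Set ℚ) (D : Set ℕ), Nonempty (ℚ ↪o ↥C) ∧ D.Infinite ∧
        ∀ x ∈ C, ∀ d ∈ D, c x d = 0) ∨
      (∃ (C : Set ℚ) (D : Set ℕ), C.ncard = k ∧ D.ncard = k ∧
        ∀ x ∈ C, ∀ d ∈ D, c x d = 1)) ∧
    (∀ c : ↥(Set.Iio (omega0 ^ omega0)) → ℕ → Fin 2,
      (∃ (C : Set ↥(Set.Iio (omega0 ^ omega0))) (D : Set ℕ),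
        Nonempty (↥C ≃o ↥(Set.Iio (omega0 ^ omega0))) ∧ D.Infinite ∧
        ∀ x ∈ C, ∀ d ∈ D, c x d = 0) ∨
      (∃ (C : Set ↥(Set.Iio (omega0 ^ omega0))) (D : Set ℕ),
        C.ncard = k ∧ D.ncard = k ∧ ∀ x ∈ C, ∀ d ∈ D, c x d = 1)) :=
  ⟨rat_zero_rectangle_or_hasRectangle k, opow_omega0_zero_rectangle_or_hasRectangle k⟩
end

section
/- Let k and m be natural numbers, let F and P be linear orders, and let S₀, …, S_{k-1} and T₀, …, T_{m-1} be linear orders. Suppose that for all i < k and j < m the following holds: for every E ⊆ Sᵢ × Tⱼ, either there exist C ⊆ Sᵢ order-isomorphic to Sᵢ and D ⊆ Tⱼ order-isomorphic to Tⱼ with C × D ⊆ (Sᵢ × Tⱼ) \ E, or there exist C ⊆ Sᵢ admitting an order embedding of F and D ⊆ Tⱼ admitting an order embedding of P with C × D ⊆ E. Let S be the lexicographic sum S₀ + ⋯ + S_{k-1} and T the lexicographic sum T₀ + ⋯ + T_{m-1}. Then for every E ⊆ S × T, either there exist C ⊆ S order-isomorphic to S and D ⊆ T order-isomorphic to T with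 C × D ⊆ (S × T) \ E, or there exist C ⊆ S admitting an order embedding of F and D ⊆ T admitting an order embedding of P with C × D ⊆ E. -/
/-!
Treat the finitely many pairs `(i, j)` one at a time, keeping copies of every `Sᵢ` and `Tⱼ`
inside themselves. At the pair `(i, j)`, colour `Sᵢ × Tⱼ` by pulling `E` back along the current
copies and apply the relation for `(Sᵢ; Tⱼ)`. Either it produces copies of `F` and `P` whose
product lies in `E`, and these embed into the sums through the `i`-th and `j`-th summands, or
it produces copies of `Sᵢ` and `Tⱼ` inside the current ones that miss `E`; shrinking copies
keeps every pair already treated disjoint from `E`. Once all pairs are treated, the summandwise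
copies assemble into copies of `Σ Sᵢ` and `Σ Tⱼ` whose product misses `E`.
-/

/-- The polarised partition relation `(α; β) → (α F; β P)`. -/
def PolarisedArrow (α β F P : Type*) [LE α] [LE β] [LE F] [LE P] : Prop :=
  ∀ E : Set (α × β),
    (∃ (C : Set α) (D : Set β), Nonempty (α ≃o C) ∧ Nonempty (β ≃o D) ∧
      ∀ x ∈ C, ∀ y ∈ D, (x, y) ∉ E) ∨
    (∃ (C : Set α) (D : Set β), Nonempty (F ↪o C) ∧ Nonempty (P ↪o D) ∧
      ∀ x ∈ C, ∀ y ∈ D, (x, y) ∈ E)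

section Copies

variable {α β γ δ : Type*} [Preorder α] [Preorder β] [LE γ] [LE δ]

theorem exists_sets_orderIso_iff_exists_orderEmbeddings (R : α → β → Prop) :
    (∃ (C : Set α) (D : Set β), Nonempty (γ ≃o C) ∧ Nonempty (δ ≃o D) ∧
      ∀ x ∈ C, ∀ y ∈ D, R x y) ↔
      ∃ (f : γ ↪o α) (g : δ ↪o β), ∀ x y, R (f x) (g y) := by
  constructor
  · rintro ⟨C, D, ⟨e⟩, ⟨e'⟩, hR⟩
    exact ⟨e.toOrderEmbedding.trans (OrderEmbedding.subtype _),
      e'.toOrderEmbedding.trans (OrderEmbedding.subtype _), fun x y => hR _ (e x).2 _ (e' y).2⟩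
  · rintro ⟨f, g, hR⟩
    refine ⟨Set.range f, Set.range g, ⟨f.orderIso⟩, ⟨g.orderIso⟩, ?_⟩
    rintro _ ⟨x, rfl⟩ _ ⟨y, rfl⟩
    exact hR x y

theorem exists_sets_orderEmbedding_iff_exists_orderEmbeddings (R : α → β → Prop) :
    (∃ (C : Set α) (D : Set β), Nonempty (γ ↪o C) ∧ Nonempty (δ ↪o D) ∧
      ∀ x ∈ C, ∀ y ∈ D, R x y) ↔
      ∃ (f : γ ↪o α) (g : δ ↪o β), ∀ x y, R (f x) (g y) := by
  constructor
  · rintro ⟨C, D, ⟨e⟩, ⟨e'⟩, hR⟩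
    exact ⟨e.trans (OrderEmbedding.subtype _), e'.trans (OrderEmbedding.subtype _),
      fun x y => hR _ (e x).2 _ (e' y).2⟩
  · rintro ⟨f, g, hR⟩
    refine ⟨Set.range f, Set.range g, ⟨f.orderIso.toOrderEmbedding⟩,
      ⟨g.orderIso.toOrderEmbedding⟩, ?_⟩
    rintro _ ⟨x, rfl⟩ _ ⟨y, rfl⟩
    exact hR x y

theorem polarisedArrow_iff {F P : Type*} [LE F] [LE P] :
    PolarisedArrow α β F P ↔ ∀ E : Set (α × β),
      (∃ (g : α ↪o α) (g' : β ↪o β), ∀ x y, (g x, g' y) ∉ E) ∨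
      (∃ (f : F ↪o α) (p : P ↪o β), ∀ x y, (f x, p y) ∈ E) := by
  simp only [PolarisedArrow, exists_sets_orderIso_iff_exists_orderEmbeddings,
    exists_sets_orderEmbedding_iff_exists_orderEmbeddings]

end Copies

section SigmaLex

variable {ι : Type*} [Preorder ι] {A B : ι → Type*} [∀ i, PartialOrder (A i)]
  [∀ i, PartialOrder (B i)]

def OrderEmbedding.sigmaLexMk (i : ι) : A i ↪o Σₗ i, A i :=
  OrderEmbedding.ofMapLEIff (fun a => toLex ⟨i, a⟩) fun a b => by
    refine ⟨?_, Sigma.Lex.right (r := (· < ·)) (s := fun _ => (· ≤ ·)) a b⟩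
    rintro (⟨_, _, hii⟩ | ⟨_, _, hab⟩)
    · exact absurd hii (lt_irrefl i)
    · exact hab

def OrderEmbedding.sigmaLexMap (g : ∀ i, A i ↪o B i) : (Σₗ i, A i) ↪o Σₗ i, B i :=
  OrderEmbedding.ofMapLEIff (fun p => toLex ⟨(ofLex p).1, g _ (ofLex p).2⟩) <| by
    rintro ⟨i, a⟩ ⟨j, b⟩
    constructor
    · rintro (⟨_, _, hij⟩ | ⟨_, _, hab⟩)
      · exact Sigma.Lex.left _ _ hij
      · exact Sigma.Lex.right _ _ ((g i).le_iff_le.1 hab)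
    · rintro (⟨_, _, hij⟩ | ⟨_, _, hab⟩)
      · exact Sigma.Lex.left _ _ hij
      · exact Sigma.Lex.right _ _ ((g i).le_iff_le.2 hab)

end SigmaLex

namespace PolarisedArrow

variable {ι κ F P : Type*} [LE F] [LE P] {S : ι → Type*} {T : κ → Type*}

theorem exists_simultaneous [Finite ι] [Finite κ] [∀ i, Preorder (S i)] [∀ j, Preorder (T j)]
    (h : ∀ i j, PolarisedArrow (S i) (T j) F P) (E : ∀ i j, Set (S i × T j)) :
    (∃ (g : ∀ i, S i ↪o S i) (g' : ∀ j, T j ↪o T j),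
      ∀ i j x y, (g i x, g' j y) ∉ E i j) ∨
      ∃ i j, ∃ (f : F ↪o S i) (p : P ↪o T j), ∀ x y, (f x, p y) ∈ E i j := by
  classical
  have := Fintype.ofFinite ι
  have := Fintype.ofFinite κ
  simp only [polarisedArrow_iff] at h
  suffices ∀ s : Finset (ι × κ),
      (∃ (g : ∀ i, S i ↪o S i) (g' : ∀ j, T j ↪o T j),
        ∀ q ∈ s, ∀ x y, (g q.1 x, g' q.2 y) ∉ E q.1 q.2) ∨
      ∃ i j, ∃ (f : F ↪o S i) (p : P ↪o T j), ∀ x y, (f x, p y) ∈ E i j from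
    (this Finset.univ).imp
      (fun ⟨g, g', hg⟩ => ⟨g, g', fun i j => hg (i, j) (Finset.mem_univ _)⟩) id
  intro s
  induction s using Finset.induction_on with
  | empty => exact .inl ⟨fun _ => RelEmbedding.refl _, fun _ => RelEmbedding.refl _, by simp⟩
  | insert q s _ ih =>
    obtain ⟨i, j⟩ := q
    refine ih.elim (fun ⟨g, g', hg⟩ => ?_) .inr
    rcases h i j {z | (g i z.1, g' j z.2) ∈ E i j} with ⟨u, u', hu⟩ | ⟨f, p, hfp⟩
    · let v : ∀ i', S i' ↪o S i' := Function.update (fun _ => RelEmbedding.refl _) i u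
      let v' : ∀ j', T j' ↪o T j' := Function.update (fun _ => RelEmbedding.refl _) j u'
      refine .inl ⟨fun i' => (v i').trans (g i'), fun j' => (v' j').trans (g' j'), ?_⟩
      rw [Finset.forall_mem_insert]
      refine ⟨fun x y => ?_, fun q hq x y => hg q hq _ _⟩
      simpa [v, v'] using hu x y
    · exact .inr ⟨i, j, f.trans (g i), p.trans (g' j), hfp⟩

theorem sigmaLex [Preorder ι] [Preorder κ] [Finite ι] [Finite κ] [∀ i, PartialOrder (S i)]
    [∀ j, PartialOrder (T j)] (h : ∀ i j, PolarisedArrow (S i) (T j) F P) :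
    PolarisedArrow (Σₗ i, S i) (Σₗ j, T j) F P := by
  rw [polarisedArrow_iff]
  intro E
  rcases exists_simultaneous h fun i j => {z | (toLex ⟨i, z.1⟩, toLex ⟨j, z.2⟩) ∈ E} with
    ⟨g, g', hg⟩ | ⟨i, j, f, p, hfp⟩
  · exact .inl ⟨OrderEmbedding.sigmaLexMap g, OrderEmbedding.sigmaLexMap g',
      fun ⟨i, x⟩ ⟨j, y⟩ => hg i j x y⟩
  · exact .inr ⟨f.trans (OrderEmbedding.sigmaLexMk i),
      p.trans (OrderEmbedding.sigmaLexMk j), hfp⟩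

end PolarisedArrow

/-- If the polarised partition relation `(σᵢ; τⱼ) → (σᵢ φ; τⱼ ψ)` holds for all `i < k`
and `j < m`, then `(Σσᵢ; Στⱼ) → (Σσᵢ φ; Στⱼ ψ)` holds, where the sums are lexicographic. -/
theorem stmt_7 (k m : ℕ) (F P : Type*) [LinearOrder F] [LinearOrder P]
    (S : Fin k → Type*) (T : Fin m → Type*)
    [∀ i, LinearOrder (S i)] [∀ j, LinearOrder (T j)]
    (h : ∀ (i : Fin k) (j : Fin m), ∀ E : Set (S i × T j),
      (∃ (C : Set (S i)) (D : Set (T j)), Nonempty (S i ≃o ↥C) ∧ Nonempty (T j ≃o ↥D) ∧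
        ∀ x ∈ C, ∀ y ∈ D, (x, y) ∉ E) ∨
      (∃ (C : Set (S i)) (D : Set (T j)), Nonempty (F ↪o ↥C) ∧ Nonempty (P ↪o ↥D) ∧
        ∀ x ∈ C, ∀ y ∈ D, (x, y) ∈ E)) :
    ∀ E : Set ((Σₗ i, S i) × (Σₗ j, T j)),
      (∃ (C : Set (Σₗ i, S i)) (D : Set (Σₗ j, T j)),
        Nonempty ((Σₗ i, S i) ≃o ↥C) ∧ Nonempty ((Σₗ j, T j) ≃o ↥D) ∧
        ∀ x ∈ C, ∀ y ∈ D, (x, y) ∉ E) ∨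
      (∃ (C : Set (Σₗ i, S i)) (D : Set (Σₗ j, T j)),
        Nonempty (F ↪o ↥C) ∧ Nonempty (P ↪o ↥D) ∧
        ∀ x ∈ C, ∀ y ∈ D, (x, y) ∈ E) :=
  PolarisedArrow.sigmaLex h
end

section
/- Let κ be an infinite cardinal of uncountable cofinality with κ < 𝔰_{ℵ₀}, and let K be a set of cardinality κ. For every colouring c : K × ℕ → {0,1} there exist a colour i ∈ {0,1}, a set A ⊆ K with |A| = κ, and an infinite set D ⊆ ℕ such that c(a,d) = i for all a ∈ A and d ∈ D. This is the polarised partition relation (κ; ω) → (κ; ω)₂. -/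
open Cardinal Ordinal

/-- `x` splits `y` if both `y ∩ x` and `y \ x` are infinite. -/
def Splits (x y : Set ℕ) : Prop := (y ∩ x).Infinite ∧ (y \ x).Infinite

/-- The countably splitting number `𝔰_{ℵ₀}`: the least cardinality of a family `F` of
subsets of `ℕ` such that for every countable collection `X` of infinite subsets of `ℕ`
some single member of `F` splits every element of `X`. -/
noncomputable def countablySplittingNumber : Cardinal :=
  sInf { c : Cardinal | ∃ F : Set (Set ℕ), #F = c ∧
    ∀ X : Set (Set ℕ), X.Countable → (∀ y ∈ X, y.Infinite) →
      ∃ x ∈ F, ∀ y ∈ X, Splits x y }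

/-!
Colour `a ∈ K` by the set `x_a = {n | c a n = 0}`. Fewer than `𝔰_{ℵ₀}` sets cannot
countably split, so some countable family `X` of infinite sets has, for every `a`, a member
`y_a` not split by `x_a`: the colouring `c a` is constant, with value `i_a`, on `y_a`
outside a finite set `s_a`. There are only countably many triples `(y_a, i_a, s_a)`, so by
uncountable cofinality `κ` many `a` share one triple `(y, i, s)`, and `y \ s` is homogeneous
of colour `i` for all of them.
-/

lemma exists_countable_forall_not_splits {F : Set (Set ℕ)}
    (hF : #F < countablySplittingNumber) :
    ∃ X : Set (Set ℕ), X.Countable ∧ (∀ y ∈ X, y.Infinite) ∧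
      ∀ x ∈ F, ∃ y ∈ X, ¬ Splits x y := by
  by_contra! h
  exact hF.not_ge (csInf_le' ⟨F, rfl, h⟩)

lemma exists_finite_setOf_ne_of_not_splits {c : ℕ → Fin 2} {y : Set ℕ}
    (h : ¬ Splits {n | c n = 0} y) : ∃ i, {d ∈ y | c d ≠ i}.Finite := by
  rw [Splits, not_and_or, Set.not_infinite, Set.not_infinite] at h
  rcases h with hzero | hone
  · exact ⟨1, hzero.subset fun d ⟨hd, hcd⟩ => ⟨hd, show c d = 0 by omega⟩⟩
  · exact ⟨0, hone.subset fun d ⟨hd, hcd⟩ => ⟨hd, hcd⟩⟩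

/-- If `κ` is an infinite cardinal of uncountable cofinality with `κ < 𝔰_{ℵ₀}`, then
the polarised partition relation `(κ; ω) → (κ; ω)₂` holds. -/
theorem stmt_10 (κ : Cardinal) (hκ : ℵ₀ ≤ κ) (hcof : ℵ₀ < κ.ord.cof)
    (hs : κ < countablySplittingNumber)
    (K : Type) (hK : #K = κ) (c : K → ℕ → Fin 2) :
    ∃ (i : Fin 2) (A : Set K) (D : Set ℕ),
      #A = κ ∧ D.Infinite ∧ ∀ a ∈ A, ∀ d ∈ D, c a d = i := by
  subst hK
  have hrange : #(Set.range fun a n => c a n = 0) < countablySplittingNumber :=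
    mk_range_le.trans_lt hs
  obtain ⟨X, hXc, hXinf, hX⟩ := exists_countable_forall_not_splits hrange
  have : Countable X := hXc.to_subtype
  choose y hyX hy using fun a => hX _ ⟨a, rfl⟩
  choose i hi using fun a => exists_finite_setOf_ne_of_not_splits (hy a)
  let f : K → X × Fin 2 × Finset ℕ := fun a => (⟨y a, hyX a⟩, i a, (hi a).toFinset)
  obtain ⟨⟨⟨y₀, hy₀⟩, i₀, s⟩, hfibre⟩ :=
    infinite_pigeonhole f hκ (mk_le_aleph0.trans_lt hcof)
  refine ⟨i₀, f ⁻¹' {(⟨y₀, hy₀⟩, i₀, s)}, y₀ \ s, hfibre,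
    (hXinf y₀ hy₀).sdiff s.finite_toSet, ?_⟩
  rintro a ha d ⟨hdy, hds⟩
  simp only [Set.mem_preimage, Set.mem_singleton_iff, f, Prod.mk.injEq, Subtype.mk.injEq] at ha
  obtain ⟨rfl, rfl, rfl⟩ := ha
  by_contra hne
  exact hds ((hi a).mem_toFinset.mpr ⟨hdy, hne⟩)
end

section
/- Let κ ≤ 𝔠 be a cardinal of uncountable cofinality, where 𝔠 is the cardinality of the continuum, and let α be an ordinal with α < 𝔱 and α < cf(κ). Let K be the set of ordinals below the initial ordinal of κ. For every colouring c : K × ℕ → {0,1}, either there exist A ⊆ K with |A| = κ and an infinite set D ⊆ ℕ such that c is constantly 0 on A × D, or there exist A ⊆ K of order type α and an infinite set D ⊆ ℕ such that c is constantly 1 on A × D. This is the polarised partition relation (κ; ω) → (κ α; ω ω). -/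
/-!
Write `E a = {n | c a n = 1}` for the columns of row `a` coloured `1`. If for some infinite `D`
and some `m` there are `κ` rows coloured `0` on all of `D \ [0, m)`, the first alternative holds.
Otherwise every infinite `D' ⊆ ℕ` is met infinitely often by unboundedly many rows (`Rich`),
because `cf κ > ω` makes a countable union of sets of size `< κ` small.

Under richness one builds, by induction on `α < min(𝔱, cf κ)`, an increasing `α`-sequence of rows
together with an infinite set of columns contained in all of them. A successor step adds one row
above the previous ones. At a limit of uncountable cofinality, the blocks for the ordinals
`i < α` are built along a `⊆*`-decreasing chain of column sets of length `α < 𝔱`; a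
pseudo-intersection is almost contained in each of them, and as `cf α > ω` one finite correction
works for cofinally many `i`, whose blocks are glued together. At a limit of cofinality `ω`
there is no room for finite corrections, so after each block one commits to a column `kₙ` that
all later rows must contain, and the final set of columns is `{kₙ}`.
-/

open Cardinal Ordinal

/-- The tower number `𝔱`, as an ordinal: the least ordinal `δ` such that there is a
sequence `⟨x ξ : ξ < δ⟩` of infinite subsets of `ℕ` with `x β \ x γ` finite whenever
`γ < β < δ`, for which no infinite `y ⊆ ℕ` satisfies that `y \ x ξ` is finite for
all `ξ < δ`. -/
noncomputable def towerNumber : Ordinal :=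
  sInf { δ : Ordinal | ∃ x : Ordinal → Set ℕ,
    (∀ ξ < δ, (x ξ).Infinite) ∧
    (∀ γ β, γ < β → β < δ → (x β \ x γ).Finite) ∧
    ¬ ∃ y : Set ℕ, y.Infinite ∧ ∀ ξ < δ, (y \ x ξ).Finite }

open Set Order

universe u

namespace PolarisedPartition

theorem exists_seq_of_step {X : Type*} {P : X → Prop} {R : ℕ → X → X → Prop} {x₀ : X}
    (h₀ : P x₀) (h : ∀ n x, P x → ∃ y, P y ∧ R n x y) :
    ∃ s : ℕ → X, s 0 = x₀ ∧ (∀ n, P (s n)) ∧ ∀ n, R n (s n) (s (n + 1)) := by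
  have : Nonempty X := ⟨x₀⟩
  choose! F hF using h
  let s : ℕ → X := fun n => Nat.rec x₀ (fun n x => F n x) n
  have hP : ∀ n, P (s n) := fun n => by
    induction n with
    | zero => exact h₀
    | succ n ih => exact (hF n _ ih).1
  exact ⟨s, rfl, hP, fun n => (hF n _ (hP n)).2⟩

theorem exists_transfinite_chain {X : Type*} [Nonempty X] {θ : Ordinal}
    (Good : Ordinal → X → Prop) (Compat : X → X → Prop)
    (h : ∀ i < θ, ∀ s : Ordinal → X, (∀ j < i, Good j (s j)) →
      (∀ j k, j < k → k < i → Compat (s j) (s k)) → ∃ x, Good i x ∧ ∀ j < i, Compat (s j) x) :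
    ∃ s : Ordinal → X, (∀ i < θ, Good i (s i)) ∧ ∀ j i, j < i → i < θ → Compat (s j) (s i) := by
  let s : Ordinal → X := Ordinal.lt_wf.fix fun i prev =>
    Classical.epsilon fun x => Good i x ∧ ∀ j (hj : j < i), Compat (prev j hj) x
  have hs : ∀ i, s i = Classical.epsilon fun x => Good i x ∧ ∀ j < i, Compat (s j) x :=
    fun i => Ordinal.lt_wf.fix_eq _ i
  have key : ∀ i < θ, Good i (s i) ∧ ∀ j < i, Compat (s j) (s i) := by
    intro i
    induction i using WellFoundedLT.induction with
    | _ i ih =>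
      intro hi
      rw [hs i]
      exact Classical.epsilon_spec (h i hi s (fun j hj => (ih j hj (hj.trans hi)).1)
        (fun j k hjk hk => (ih k hk (hk.trans hi)).2 j hjk))
  exact ⟨s, fun i hi => (key i hi).1, fun j i hji hi => (key i hi).2 j hji⟩

theorem exists_pseudoIntersection_of_lt_towerNumber {δ : Ordinal} (hδ : δ < towerNumber)
    {x : Ordinal → Set ℕ} (hinf : ∀ ξ < δ, (x ξ).Infinite)
    (hdec : ∀ γ β, γ < β → β < δ → (x β \ x γ).Finite) :
    ∃ y : Set ℕ, y.Infinite ∧ ∀ ξ < δ, (y \ x ξ).Finite := by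
  by_contra h
  exact hδ.not_ge (csInf_le' ⟨x, hinf, hdec, h⟩)

theorem exists_subset_pseudoIntersection {δ : Ordinal} (hδ : δ < towerNumber) {D : Set ℕ}
    (hD : D.Infinite) {x : Ordinal → Set ℕ} (hinf : ∀ ξ < δ, (x ξ).Infinite)
    (hsub : ∀ ξ < δ, x ξ ⊆ D) (hdec : ∀ γ β, γ < β → β < δ → (x β \ x γ).Finite) :
    ∃ y ⊆ D, y.Infinite ∧ ∀ ξ < δ, (y \ x ξ).Finite := by
  rcases eq_zero_or_pos δ with rfl | hδ₀
  · exact ⟨D, subset_rfl, hD, fun ξ hξ => absurd hξ (not_lt_bot (a := ξ))⟩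
  obtain ⟨y, hy, hyx⟩ := exists_pseudoIntersection_of_lt_towerNumber hδ hinf hdec
  refine ⟨y ∩ x 0, inter_subset_right.trans (hsub 0 hδ₀), ?_,
    fun ξ hξ => (hyx ξ hξ).subset (sdiff_subset_sdiff_left inter_subset_left)⟩
  rw [← Set.sdiff_sdiff_right_self]
  exact hy.sdiff (hyx 0 hδ₀)

theorem exists_nat_cofinal {α : Ordinal} (hlim : IsSuccLimit α) (hα : α.cof = ℵ₀) :
    ∃ f : ℕ → Ordinal, (∀ n, f n < α) ∧ ∀ β < α, ∃ n, β < f n := by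
  obtain ⟨f, hf⟩ := exists_isFundamentalSeq (o := α) (a := ω) (by rw [hα, ord_aleph0])
  refine ⟨fun n => f ⟨n, natCast_lt_omega0 n⟩, fun n => (f _).2, fun β hβ => ?_⟩
  obtain ⟨_, ⟨⟨i, hi⟩, rfl⟩, hle⟩ := hf.isCofinal_range ⟨succ β, hlim.succ_lt hβ⟩
  obtain ⟨n, rfl⟩ := lt_omega0.1 hi
  exact ⟨n, (lt_succ β).trans_le hle⟩

theorem exists_cofinal_fiber {α : Ordinal.{u}} (hα : ℵ₀ < α.cof) (e : Ordinal → ℕ) :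
    ∃ m, ∀ β < α, ∃ i, β < i ∧ i < α ∧ e i = m := by
  by_contra! h
  choose b hbα hb using h
  have hB : ⨆ m, b m < α := lift_iSup_lt_of_lt_cof (by simpa using hα) hbα
  exact hb _ (succ (⨆ m, b m)) ((Ordinal.le_iSup b _).trans_lt (lt_succ _))
    ((one_lt_cof_iff.1 (one_lt_aleph0.trans hα)).succ_lt hB) rfl

variable {ι : Type u} [LinearOrder ι]

theorem exists_forall_lt_of_mk_lt_cof {s : Set ι} (hs : #s < Order.cof ι) :
    ∃ b, ∀ a ∈ s, a < b :=
  not_isCofinal_iff.1 fun h => (cof_le h).not_gt hs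

theorem exists_forall_lt_of_card_lt_cof {α : Ordinal.{u}} (hα : α.card < Order.cof ι)
    (g : Ordinal → ι) : ∃ b, ∀ β < α, g β < b := by
  have hs : Cardinal.lift.{u + 1} #(g '' Iio α) ≤ Cardinal.lift.{u + 1} α.card := by
    simpa [Cardinal.mk_Iio_ordinal] using mk_image_le_lift (f := g) (s := Iio α)
  obtain ⟨b, hb⟩ := exists_forall_lt_of_mk_lt_cof ((lift_le.1 hs).trans_lt hα)
  exact ⟨b, fun β hβ => hb _ (mem_image_of_mem g hβ)⟩

theorem exists_forall_lt_of_aleph0_lt_cof (h : ℵ₀ < Order.cof ι) (g : ℕ → ι) :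
    ∃ b, ∀ n, g n < b := by
  obtain ⟨b, hb⟩ := exists_forall_lt_of_mk_lt_cof ((countable_range g).le_aleph0.trans_lt h)
  exact ⟨b, fun n => hb _ (mem_range_self n)⟩

variable {E : ι → Set ℕ} {S S' : Set ι} {D D' : Set ℕ} {α : Ordinal.{u}} {g : Ordinal → ι}

def Rich (E : ι → Set ℕ) (S : Set ι) (D : Set ℕ) : Prop :=
  ∀ D' ⊆ D, D'.Infinite → ∀ a, ∃ b ∈ S, a < b ∧ (E b ∩ D').Infinite

def IsBlock (E : ι → Set ℕ) (S : Set ι) (α : Ordinal) (g : Ordinal → ι) (D : Set ℕ) : Prop :=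
  StrictMonoOn g (Iio α) ∧ ∀ β < α, g β ∈ S ∧ D ⊆ E (g β)

def HasBlocks (E : ι → Set ℕ) (α : Ordinal) : Prop :=
  ∀ S D, D.Infinite → Rich E S D → ∃ g W, W ⊆ D ∧ W.Infinite ∧ IsBlock E S α g W

theorem Rich.mono (h : Rich E S D) (hD : D' ⊆ D) : Rich E S D' :=
  fun X hX hXinf => h X (hX.trans hD) hXinf

theorem Rich.inter_Ioi (h : Rich E S D) (lo : ι) : Rich E (S ∩ Ioi lo) D := by
  intro X hX hXinf a
  obtain ⟨b, hbS, hab, hb⟩ := h X hX hXinf (max a lo)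
  exact ⟨b, ⟨hbS, (le_max_right a lo).trans_lt hab⟩, (le_max_left a lo).trans_lt hab, hb⟩

theorem IsBlock.mono (h : IsBlock E S α g D) (hS : S ⊆ S') (hD : D' ⊆ D) :
    IsBlock E S' α g D' :=
  ⟨h.1, fun β hβ => ⟨hS (h.2 β hβ).1, hD.trans (h.2 β hβ).2⟩⟩

theorem IsBlock.glue [Nonempty ι] {J : Type*} [LinearOrder J] [WellFoundedLT J]
    {f : J → Ordinal} {G : J → Ordinal → ι} (hG : ∀ j, IsBlock E S (f j) (G j) D)
    (hsep : ∀ i j, i < j → ∀ β < f i, ∀ γ < f j, G i β < G j γ) {α : Ordinal}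
    (hf : ∀ β < α, ∃ j, β < f j) : ∃ g, IsBlock E S α g D := by
  classical
  let first (β : Ordinal) (h : ∃ j, β < f j) : J := wellFounded_lt.min {j | β < f j} h
  have first_spec (β : Ordinal) (h : ∃ j, β < f j) : β < f (first β h) :=
    wellFounded_lt.min_mem {j | β < f j} h
  let g (β : Ordinal) : ι := if h : ∃ j, β < f j then G (first β h) β else Classical.arbitrary ι
  have hg (β : Ordinal) (h : ∃ j, β < f j) : g β = G (first β h) β := dif_pos h
  refine ⟨g, fun γ hγ β hβ hγβ => ?_, fun β hβ => ?_⟩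
  · have hβ' := hf β hβ
    have hγ' := hf γ hγ
    rw [hg β hβ', hg γ hγ']
    have hle : first γ hγ' ≤ first β hβ' :=
      wellFounded_lt.min_le (s := {j | γ < f j}) (hγβ.trans (first_spec β hβ'))
    rcases hle.lt_or_eq with hlt | heq
    · exact hsep _ _ hlt γ (first_spec γ hγ') β (first_spec β hβ')
    · rw [heq]
      exact (hG _).1 (hγβ.trans (first_spec β hβ')) (first_spec β hβ') hγβ
  · rw [hg β (hf β hβ)]
    exact (hG _).2 β (first_spec β _)

theorem hasBlocks_zero [Nonempty ι] : HasBlocks E 0 :=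
  fun _ D hD _ => ⟨fun _ => Classical.arbitrary ι, D, subset_rfl, hD,
    fun _ hβ => absurd (mem_Iio.1 hβ) not_lt_bot, fun _ hβ => absurd hβ not_lt_bot⟩

theorem HasBlocks.exists_bounded (h : HasBlocks E α) (hα : α.card < Order.cof ι)
    (hD : D.Infinite) (hR : Rich E S D) :
    ∃ g W hi, W ⊆ D ∧ W.Infinite ∧ IsBlock E (S ∩ Iio hi) α g W := by
  obtain ⟨g, W, hWD, hW, hg⟩ := h S D hD hR
  obtain ⟨hi, hhi⟩ := exists_forall_lt_of_card_lt_cof hα g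
  exact ⟨g, W, hi, hWD, hW, hg.1, fun β hβ => ⟨⟨(hg.2 β hβ).1, hhi β hβ⟩, (hg.2 β hβ).2⟩⟩

theorem HasBlocks.succ (h : HasBlocks E α) (hα : α.card < Order.cof ι) :
    HasBlocks E (succ α) := by
  intro S D hD hR
  obtain ⟨g, W, hi, hWD, hW, hg⟩ := h.exists_bounded hα hD hR
  obtain ⟨r, hrS, hir, hrW⟩ := hR W hWD hW hi
  have hlt : ∀ β < α, Function.update g α r β < r := fun β hβ => by
    rw [Function.update_of_ne hβ.ne]
    exact ((hg.2 β hβ).1.2).trans hir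
  refine ⟨Function.update g α r, W ∩ E r, inter_subset_left.trans hWD, by rwa [inter_comm],
    fun γ hγ β hβ hγβ => ?_, fun β hβ => ?_⟩
  · have hγα : γ < α := hγβ.trans_le (lt_succ_iff.1 (mem_Iio.1 hβ))
    rcases (lt_succ_iff.1 (mem_Iio.1 hβ)).lt_or_eq with hβα | rfl
    · rw [Function.update_of_ne hβα.ne, Function.update_of_ne hγα.ne]
      exact hg.1 hγα hβα hγβ
    · simpa using hlt γ hγα
  · rcases (lt_succ_iff.1 hβ).lt_or_eq with hβα | rfl
    · rw [Function.update_of_ne hβα.ne]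
      exact ⟨(hg.2 β hβα).1.1, inter_subset_left.trans (hg.2 β hβα).2⟩
    · rw [Function.update_self]
      exact ⟨hrS, inter_subset_right⟩

/-- If no commitment worked, the failed ones would form a fusion sequence `(kₙ, Zₙ, aₙ)` with
`kₙ₊₁ ∈ Zₙ`, where no row of `S` above `aₙ` containing `kₙ` meets `Zₙ` infinitely. A row above
all `aₙ` meeting `{kₙ}` infinitely contains some `kₙ`, and then meets `Zₙ ⊇ {kₘ | m > n}`
infinitely. -/
theorem Rich.exists_commit (hcof : ℵ₀ < Order.cof ι) (hR : Rich E S D) (hD : D.Infinite) :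
    ∃ k ∈ D, ∃ D' ⊆ D, D'.Infinite ∧ Rich E (S ∩ {b | k ∈ E b}) D' := by
  by_contra! hcon
  let Bad (p : ℕ × Set ℕ × ι) : Prop := p.1 ∈ D ∧ p.2.1 ⊆ D ∧ p.2.1.Infinite ∧
    (∀ x ∈ p.2.1, p.1 < x) ∧ ∀ b ∈ S, p.1 ∈ E b → p.2.2 < b → (E b ∩ p.2.1).Finite
  have step : ∀ Z ⊆ D, Z.Infinite → ∃ p, Bad p ∧ p.1 ∈ Z ∧ p.2.1 ⊆ Z := by
    intro Z hZD hZ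
    obtain ⟨k, hk⟩ := hZ.nonempty
    have hk' := hcon k (hZD hk) (Z \ Iic k) (sdiff_subset.trans hZD) (hZ.sdiff (finite_Iic k))
    simp only [Rich, not_forall, not_exists, not_and, Set.not_infinite] at hk'
    obtain ⟨Z', hZ'Z, hZ', a, ha⟩ := hk'
    exact ⟨(k, Z', a), ⟨hZD hk, hZ'Z.trans (sdiff_subset.trans hZD), hZ',
      fun x hx => by simpa using (hZ'Z hx).2, fun b hbS hkb hab => ha b ⟨hbS, hkb⟩ hab⟩,
      hk, hZ'Z.trans sdiff_subset⟩
  obtain ⟨p₀, hp₀, -⟩ := step D subset_rfl hD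
  obtain ⟨s, -, hs, hss⟩ := exists_seq_of_step (R := fun _ x y => y.1 ∈ x.2.1 ∧ y.2.1 ⊆ x.2.1)
    hp₀ fun _ x hx => step x.2.1 hx.2.1 hx.2.2.1
  have hZ : Antitone fun n => (s n).2.1 := antitone_nat_of_succ_le fun n => (hss n).2
  have hk : StrictMono fun n => (s n).1 :=
    strictMono_nat_of_lt_succ fun n => (hs n).2.2.2.1 _ (hss n).1
  have hkZ : ∀ i j, i < j → (s j).1 ∈ (s i).2.1 := by
    intro i j hij
    obtain ⟨j, rfl⟩ := Nat.exists_eq_add_of_lt hij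
    exact hZ (Nat.le_add_right i j) (hss (i + j)).1
  obtain ⟨B, hB⟩ := exists_forall_lt_of_aleph0_lt_cof hcof fun n => (s n).2.2
  obtain ⟨b, hbS, hBb, hb⟩ := hR (range fun n => (s n).1) (range_subset_iff.2 fun n => (hs n).1)
    (infinite_range_of_injective hk.injective) B
  obtain ⟨_, hkb, n, rfl⟩ := hb.nonempty
  refine ((hs n).2.2.2.2 b hbS hkb ((hB n).trans hBb)).not_infinite
    ((hb.sdiff (finite_Iic (s n).1)).mono ?_)
  rintro _ ⟨⟨hx, j, rfl⟩, hjn⟩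
  exact ⟨hx, hkZ n j (hk.lt_iff_lt.1 (not_le.1 hjn))⟩

theorem Rich.exists_block_commit (hcof : ℵ₀ < Order.cof ι) (hα : HasBlocks E α)
    (hcard : α.card < Order.cof ι) (hD : D.Infinite) (hR : Rich E S D) :
    ∃ g W k hi, IsBlock E (S ∩ Iio hi) α g W ∧ W ⊆ D ∧ k ∈ W ∧
      ∃ D' ⊆ W \ Iic k, D'.Infinite ∧ Rich E (S ∩ {b | k ∈ E b} ∩ Ioi hi) D' := by
  obtain ⟨g, W, hi, hWD, hW, hg⟩ := hα.exists_bounded hcard hD hR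
  obtain ⟨k, hkW, D', hD'W, hD', hR'⟩ := (hR.mono hWD).exists_commit hcof hW
  exact ⟨g, W, k, hi, hg, hWD, hkW, D' \ Iic k, sdiff_subset_sdiff_left hD'W,
    hD'.sdiff (finite_Iic k), (hR'.mono sdiff_subset).inter_Ioi hi⟩

theorem exists_separated_blocks_nat (hcof : ℵ₀ < Order.cof ι) {f : ℕ → Ordinal.{u}}
    (hf : ∀ n, HasBlocks E (f n)) (hcard : ∀ n, (f n).card < Order.cof ι) (hD : D.Infinite)
    (hR : Rich E S D) :
    ∃ (G : ℕ → Ordinal → ι) (K : Set ℕ), K ⊆ D ∧ K.Infinite ∧ (∀ n, IsBlock E S (f n) (G n) K) ∧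
      ∀ i j, i < j → ∀ β < f i, ∀ γ < f j, G i β < G j γ := by
  -- A state is (admissible rows, remaining columns). Step `n` builds a block below `hi`, then
  -- commits to a column `k`: from now on only rows above `hi` that contain `k` are admissible.
  obtain ⟨s, hs0, -, hss⟩ := exists_seq_of_step (x₀ := (S, D))
    (P := fun x => x.2.Infinite ∧ Rich E x.1 x.2)
    (R := fun n x y => ∃ g W k hi, IsBlock E (x.1 ∩ Iio hi) (f n) g W ∧ W ⊆ x.2 ∧ k ∈ W ∧
      y.2 ⊆ W \ Iic k ∧ y.1 ⊆ x.1 ∩ {b | k ∈ E b} ∩ Ioi hi) ⟨hD, hR⟩ fun n x hx => by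
    obtain ⟨g, W, k, hi, hg, hWD, hkW, D', hD'W, hD', hR'⟩ :=
      hx.2.exists_block_commit hcof (hf n) (hcard n) hx.1
    exact ⟨(_, D'), ⟨hD', hR'⟩, g, W, k, hi, hg, hWD, hkW, hD'W, subset_rfl⟩
  choose G W k hi hG hWD hkW hDW hS using hss
  have hDanti : Antitone fun n => (s n).2 :=
    antitone_nat_of_succ_le fun n => (hDW n).trans (sdiff_subset.trans (hWD n))
  have hSanti : Antitone fun n => (s n).1 :=
    antitone_nat_of_succ_le fun n => (hS n).trans (inter_subset_left.trans inter_subset_left)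
  have hkW' : ∀ n j, n ≤ j → k j ∈ W n := by
    intro n j hnj
    rcases hnj.lt_or_eq with hlt | rfl
    · exact (hDW n (hDanti (Nat.succ_le_of_lt hlt) (hWD j (hkW j)))).1
    · exact hkW n
  have hk : StrictMono k :=
    strictMono_nat_of_lt_succ fun n => by simpa using (hDW n (hWD _ (hkW (n + 1)))).2
  refine ⟨G, range k, ?_, infinite_range_of_injective hk.injective,
    fun n => ⟨(hG n).1, fun β hβ => ⟨?_, ?_⟩⟩, fun i j hij β hβ γ hγ => ?_⟩
  · rintro _ ⟨n, rfl⟩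
    simpa [hs0] using hDanti (Nat.zero_le n) (hWD n (hkW n))
  · simpa [hs0] using hSanti (Nat.zero_le n) ((hG n).2 β hβ).1.1
  · rintro _ ⟨j, rfl⟩
    rcases lt_or_ge j n with hjn | hnj
    · exact (hS j (hSanti (Nat.succ_le_of_lt hjn) ((hG n).2 β hβ).1.1)).1.2
    · exact ((hG n).2 β hβ).2 (hkW' n j hnj)
  · exact ((hG i).2 β hβ).1.2.trans (hS i (hSanti (Nat.succ_le_of_lt hij) ((hG j).2 γ hγ).1.1)).2

theorem hasBlocks_of_cof_eq_aleph0 [Nonempty ι] (hcof : ℵ₀ < Order.cof ι) (hlim : IsSuccLimit α)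
    (hα : α.cof = ℵ₀) (hcard : α.card < Order.cof ι) (IH : ∀ β < α, HasBlocks E β) :
    HasBlocks E α := by
  obtain ⟨f, hfα, hf⟩ := exists_nat_cofinal hlim hα
  intro S D hD hR
  obtain ⟨G, K, hKD, hK, hG, hsep⟩ := exists_separated_blocks_nat hcof (fun n => IH _ (hfα n))
    (fun n => (card_le_card (hfα n).le).trans_lt hcard) hD hR
  obtain ⟨g, hg⟩ := IsBlock.glue hG hsep hf
  exact ⟨g, K, hKD, hK, hg⟩

theorem exists_almost_decreasing_blocks [Nonempty ι] (hα : α < towerNumber)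
    (hcard : α.card < Order.cof ι) (IH : ∀ β < α, HasBlocks E β) (hD : D.Infinite)
    (hR : Rich E S D) :
    ∃ (W : Ordinal → Set ℕ) (G : Ordinal → Ordinal → ι),
      (∀ i < α, (W i).Infinite ∧ W i ⊆ D ∧ IsBlock E S i (G i) (W i)) ∧
      ∀ j i, j < i → i < α → (W i \ W j).Finite ∧ ∀ β < j, ∀ γ < i, G j β < G i γ := by
  -- Stage `i` is `(W, g, lo, hi)`: a block `g` on `W` with rows in `(lo, hi)`, lying above the
  -- earlier stages and almost inside their `W`.
  obtain ⟨s, hgood, hcompat⟩ := exists_transfinite_chain (X := Set ℕ × (Ordinal → ι) × ι × ι)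
    (θ := α) (fun i x => x.1.Infinite ∧ x.1 ⊆ D ∧
      IsBlock E (S ∩ Ioi x.2.2.1 ∩ Iio x.2.2.2) i x.2.1 x.1)
    (fun x y => (y.1 \ x.1).Finite ∧ x.2.2.2 ≤ y.2.2.1) fun i hi s hgood hcompat => by
    have hicard : i.card < Order.cof ι := (card_le_card hi.le).trans_lt hcard
    obtain ⟨D', hD'D, hD', hD'W⟩ := exists_subset_pseudoIntersection (hi.trans hα) hD
      (fun j hj => (hgood j hj).1) (fun j hj => (hgood j hj).2.1)
      (fun j k hjk hk => (hcompat j k hjk hk).1)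
    obtain ⟨lo, hlo⟩ := exists_forall_lt_of_card_lt_cof hicard fun j => (s j).2.2.2
    obtain ⟨g, W, hi', hWD', hW, hg⟩ :=
      (IH i hi).exists_bounded hicard hD' ((hR.mono hD'D).inter_Ioi lo)
    exact ⟨(W, g, lo, hi'), ⟨hW, hWD'.trans hD'D, hg⟩,
      fun j hj => ⟨(hD'W j hj).subset (sdiff_subset_sdiff_left hWD'), (hlo j hj).le⟩⟩
  refine ⟨fun i => (s i).1, fun i => (s i).2.1, fun i hi => ?_,
    fun j i hji hi => ⟨(hcompat j i hji hi).1, fun β hβ γ hγ => ?_⟩⟩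
  · obtain ⟨hW, hWD, hg⟩ := hgood i hi
    exact ⟨hW, hWD, hg.mono (inter_subset_left.trans inter_subset_left) subset_rfl⟩
  · calc (s j).2.1 β < (s j).2.2.2 := ((hgood j (hji.trans hi)).2.2.2 β hβ).1.2
      _ ≤ (s i).2.2.1 := (hcompat j i hji hi).2
      _ < (s i).2.1 γ := ((hgood i hi).2.2.2 γ hγ).1.1.2

theorem hasBlocks_of_aleph0_lt_cof [Nonempty ι] (hα : α < towerNumber) (hαcof : ℵ₀ < α.cof)
    (hcard : α.card < Order.cof ι) (IH : ∀ β < α, HasBlocks E β) : HasBlocks E α := by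
  intro S D hD hR
  obtain ⟨W, G, hblock, hdec⟩ := exists_almost_decreasing_blocks hα hcard IH hD hR
  obtain ⟨D', hD'D, hD', hD'W⟩ := exists_subset_pseudoIntersection hα hD
    (fun i hi => (hblock i hi).1) (fun i hi => (hblock i hi).2.1)
    (fun j i hji hi => (hdec j i hji hi).1)
  -- As `cf α > ω`, a single bound `m` on the finite sets `D' \ W i` serves cofinally many `i`.
  have hbdd : ∀ i < α, ∃ m, ∀ x ∈ D' \ W i, x ≤ m := fun i hi => (hD'W i hi).bddAbove
  choose! e he using hbdd
  obtain ⟨m, hm⟩ := exists_cofinal_fiber hαcof e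
  have hK : ∀ i < α, e i = m → D' \ Iic m ⊆ W i := fun i hi hei x hx =>
    by_contra fun hxW => hx.2 (hei ▸ he i hi x ⟨hx.1, hxW⟩)
  obtain ⟨g, hg⟩ := IsBlock.glue (J := {i : Ordinal // i < α ∧ e i = m}) (f := Subtype.val)
    (fun j => (hblock j j.2.1).2.2.mono subset_rfl (hK j j.2.1 j.2.2))
    (fun i j hij β hβ γ hγ => (hdec i j hij j.2.1).2 β hβ γ hγ)
    (fun β hβ => let ⟨i, hβi, hi, hei⟩ := hm β hβ; ⟨⟨i, hi, hei⟩, hβi⟩)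
  exact ⟨g, D' \ Iic m, sdiff_subset.trans hD'D, hD'.sdiff (finite_Iic m), hg⟩

theorem hasBlocks_of_lt_towerNumber (hcof : ℵ₀ < Order.cof ι) (hα : α < towerNumber)
    (hcard : α.card < Order.cof ι) : HasBlocks E α := by
  have : Nonempty ι := cof_ne_zero_iff.1 (aleph0_pos.trans hcof).ne'
  induction α using WellFoundedLT.induction with
  | _ α IH =>
  have IH' : ∀ β < α, HasBlocks E β := fun β hβ =>
    IH β hβ (hβ.trans hα) ((card_le_card hβ.le).trans_lt hcard)
  rcases zero_or_succ_or_isSuccLimit α with rfl | ⟨β, rfl⟩ | hlim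
  · exact hasBlocks_zero
  · exact (IH' β (lt_succ β)).succ ((card_le_card (le_succ β)).trans_lt hcard)
  · rcases (aleph0_le_cof_iff.2 (one_lt_cof_iff.2 hlim)).lt_or_eq with hω | hω
    · exact hasBlocks_of_aleph0_lt_cof hα hω hcard IH'
    · exact hasBlocks_of_cof_eq_aleph0 hcof hlim hω.symm hcard IH'

theorem rich_univ_of_forall_mk_lt {κ : Cardinal.{u}} (hκ : ℵ₀ < κ.ord.cof)
    (E : κ.ord.ToType → Set ℕ) (h : ∀ D : Set ℕ, D.Infinite → ∀ m, #{a | Disjoint (E a) (D \ Iio m)} < κ) :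
    Rich E univ univ := by
  intro D _ hD a
  by_contra! hno
  set X : ℕ → Set κ.ord.ToType := fun m => {b | Disjoint (E b) (D \ Iio m)}
  have hcover : (univ : Set κ.ord.ToType) ⊆ Iic a ∪ ⋃ m, X m := by
    intro b _
    rcases le_or_gt b a with hba | hab
    · exact Or.inl hba
    · obtain ⟨m, hm⟩ := (hno b (mem_univ b) hab).bddAbove
      refine Or.inr (mem_iUnion.2 ⟨m + 1, disjoint_left.2 fun n hnE hnD => ?_⟩)
      exact hnD.2 (Nat.lt_succ_of_le (hm ⟨hnE, hnD.1⟩))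
  have hκ₀ : ℵ₀ < κ := hκ.trans_le (cof_ord_le κ)
  have hIic : #(Iic a) < κ := by
    rw [← Iio_insert]
    exact mk_insert_le.trans_lt
      (add_lt_of_lt hκ₀.le (by simpa using mk_Iio_lt a (by simp)) (one_lt_aleph0.trans hκ₀))
  have hX : ⨆ m, #(X m) < κ :=
    lift_iSup_lt_of_lt_cof_ord (by simpa using hκ) fun m => h D hD m
  have hU : #(⋃ m, X m) < κ := by
    have := mk_iUnion_le_lift X
    simp only [Cardinal.lift_uzero, mk_nat, lift_aleph0] at this
    exact this.trans_lt (mul_lt_of_lt hκ₀.le hκ₀ hX)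
  have hsmall := (mk_le_mk_of_subset hcover).trans_lt
    ((mk_union_le _ _).trans_lt (add_lt_of_lt hκ₀.le hIic hU))
  rw [mk_univ, mk_ord_toType] at hsmall
  exact hsmall.false

end PolarisedPartition

theorem stmt_12_general (κ : Cardinal) (hcof : ℵ₀ < κ.ord.cof)
    (α : Ordinal) (hα1 : α < towerNumber) (hα2 : α < (κ.ord.cof).ord)
    (c : κ.ord.ToType → ℕ → Fin 2) :
    (∃ (A : Set κ.ord.ToType) (D : Set ℕ),
      #A = κ ∧ D.Infinite ∧ ∀ a ∈ A, ∀ d ∈ D, c a d = 0) ∨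
    (∃ (A : Set κ.ord.ToType) (D : Set ℕ),
      Nonempty (↥A ≃o α.ToType) ∧ D.Infinite ∧ ∀ a ∈ A, ∀ d ∈ D, c a d = 1) := by
  set E : κ.ord.ToType → Set ℕ := fun a => {n | c a n = 1}
  by_cases h : ∃ D : Set ℕ, D.Infinite ∧ ∃ m, ¬ #{a | Disjoint (E a) (D \ Iio m)} < κ
  · obtain ⟨D, hD, m, hm⟩ := h
    refine Or.inl ⟨_, D \ Iio m, le_antisymm ?_ (not_lt.1 hm), hD.sdiff (finite_Iio m),
      fun a ha d hd => ?_⟩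
    · simpa using mk_set_le {a | Disjoint (E a) (D \ Iio m)}
    · have hd1 : c a d ≠ 1 := fun h1 => disjoint_left.1 ha h1 hd
      omega
  · push Not at h
    have hcofι : ℵ₀ < Order.cof κ.ord.ToType := by rwa [cof_toType]
    have hcard : α.card < Order.cof κ.ord.ToType := by rw [cof_toType]; exact lt_ord.1 hα2
    obtain ⟨g, W, -, hW, hg⟩ := PolarisedPartition.hasBlocks_of_lt_towerNumber hcofι hα1 hcard
      univ univ infinite_univ (PolarisedPartition.rich_univ_of_forall_mk_lt hcof E h)
    refine Or.inr ⟨g '' Iio α, W, ⟨(hg.1.orderIso g (Iio α)).symm.trans ToType.mk⟩, hW, ?_⟩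
    rintro _ ⟨β, hβ, rfl⟩ d hd
    exact (hg.2 β hβ).2 hd

/-- For cardinals `κ ≤ 𝔠` of uncountable cofinality and ordinals `α < min(𝔱, cf κ)`,
the polarised partition relation `(κ; ω) → (κ α; ω ω)` holds. -/
theorem stmt_12 (κ : Cardinal) (hκ : κ ≤ continuum) (hcof : ℵ₀ < κ.ord.cof)
    (α : Ordinal) (hα1 : α < towerNumber) (hα2 : α < (κ.ord.cof).ord)
    (c : κ.ord.ToType → ℕ → Fin 2) :
    (∃ (A : Set κ.ord.ToType) (D : Set ℕ),
      #A = κ ∧ D.Infinite ∧ ∀ a ∈ A, ∀ d ∈ D, c a d = 0) ∨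
    (∃ (A : Set κ.ord.ToType) (D : Set ℕ),
      Nonempty (↥A ≃o α.ToType) ∧ D.Infinite ∧ ∀ a ∈ A, ∀ d ∈ D, c a d = 1) :=
  stmt_12_general κ hcof α hα1 hα2 c
end

section
/- Let κ be a cardinal of uncountable cofinality, let K be the set of ordinals below the initial ordinal of κ, and let (A_ξ)_{ξ ∈ K} be a family of subsets of ℚ. Then either (a) there exists X ⊆ K with |X| = cf(κ) such that for every finite subset x ⊆ X the intersection ⋂_{ξ ∈ x} A_ξ is dense in ℚ, or (b) there exists Y ⊆ K with |Y| = κ such that ℚ order-embeds into ⋂_{ξ ∈ Y} (ℚ \ A_ξ). -/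
/-!
If no `ω`-complete basis has size `cf κ`, Zorn's lemma (the property has finite character) gives a
maximal one `M`, and `|M| < cf κ`. Maximality means that every `ξ ∉ M` is excluded by a witness: a
finite `x ⊆ M` and an interval `(p, q)` on which `⋂_{η ∈ x} A η` misses `A ξ`. There are fewer
than `cf κ` witnesses, so by the infinite pigeonhole principle `κ` many `ξ` share one witness. The
set `(p, q) ∩ ⋂_{η ∈ x} A η` is then contained in all their complements, and being dense in
`(p, q)` it contains a copy of `ℚ`.
-/

open Cardinal Ordinal

/-- `A ⊆ ℚ` is dense in `ℚ` if every open interval of `ℚ` meets `A`. -/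
def DenseIn (A : Set ℚ) : Prop := ∀ p q : ℚ, p < q → ∃ r ∈ A, p < r ∧ r < q

lemma denseIn_univ : DenseIn Set.univ := fun _ _ hpq =>
  let ⟨r, hpr, hrq⟩ := exists_between hpq
  ⟨r, trivial, hpr, hrq⟩

/-- Cantor's theorem applied to the countable dense linear order `(p, q) ∩ B`. -/
lemma DenseIn.nonempty_orderEmbedding {B S : Set ℚ} (hB : DenseIn B) {p q : ℚ} (hpq : p < q)
    (hS : Set.Ioo p q ∩ B ⊆ S) : Nonempty (ℚ ↪o S) := by
  let C := Set.Ioo p q ∩ B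
  have : Nonempty C := by
    obtain ⟨r, hrB, hpr, hrq⟩ := hB p q hpq
    exact ⟨⟨r, ⟨hpr, hrq⟩, hrB⟩⟩
  have : DenselyOrdered C := ⟨fun a b hab => by
    obtain ⟨r, hrB, har, hrb⟩ := hB a b hab
    exact ⟨⟨r, ⟨a.2.1.1.trans har, hrb.trans b.2.1.2⟩, hrB⟩, har, hrb⟩⟩
  have : NoMinOrder C := ⟨fun a => by
    obtain ⟨r, hrB, hpr, hra⟩ := hB p a a.2.1.1
    exact ⟨⟨r, ⟨hpr, hra.trans a.2.1.2⟩, hrB⟩, hra⟩⟩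
  have : NoMaxOrder C := ⟨fun a => by
    obtain ⟨r, hrB, har, hrq⟩ := hB a q a.2.1.2
    exact ⟨⟨r, ⟨a.2.1.1.trans har, hrq⟩, hrB⟩, har⟩⟩
  obtain ⟨e⟩ := Order.iso_of_countable_dense ℚ C
  exact ⟨OrderEmbedding.ofStrictMono (Set.inclusion hS ∘ e) fun _ _ h => e.strictMono h⟩

theorem Cardinal.mk_finset_le_max (α : Type*) : #(Finset α) ≤ max ℵ₀ #α := by
  classical
  exact (mk_le_of_surjective List.toFinset_surjective).trans (mk_list_le_max α)

section OmegaCompleteBasis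

variable {ι : Type*} (A : ι → Set ℚ)

def IsOmegaCompleteBasis (X : Set ι) : Prop :=
  ∀ x : Finset ι, ↑x ⊆ X → DenseIn (⋂ ξ ∈ x, A ξ)

variable {A}

lemma IsOmegaCompleteBasis.mono {X Y : Set ι} (hX : IsOmegaCompleteBasis A X) (hYX : Y ⊆ X) :
    IsOmegaCompleteBasis A Y :=
  fun x hx => hX x (hx.trans hYX)

lemma IsOmegaCompleteBasis.denseIn_biInter {M : Set ι} (hM : IsOmegaCompleteBasis A M)
    (x : Finset M) : DenseIn (⋂ η ∈ x, A η) := by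
  simpa [Finset.set_biInter_finset_image] using
    hM (x.map (Function.Embedding.subtype _)) (by simp)

lemma isOmegaCompleteBasis_empty : IsOmegaCompleteBasis A ∅ := fun x hx => by
  simpa [Finset.coe_eq_empty.mp (Set.subset_empty_iff.mp hx)] using denseIn_univ

lemma isOmegaCompleteBasis_sUnion {c : Set (Set ι)} (hc : IsChain (· ⊆ ·) c) (hne : c.Nonempty)
    (h : ∀ X ∈ c, IsOmegaCompleteBasis A X) : IsOmegaCompleteBasis A (⋃₀ c) := fun x hx => by
  obtain ⟨X, hXc, hxX⟩ :=
    hc.directedOn.exists_mem_subset_of_finite_of_subset_sUnion hne x.finite_toSet hx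
  exact h X hXc x hxX

variable (A) in
lemma exists_maximal_isOmegaCompleteBasis : ∃ M, Maximal (IsOmegaCompleteBasis A) M :=
  let ⟨M, _, hM⟩ := zorn_subset_nonempty {X | IsOmegaCompleteBasis A X}
    (fun _ hc hchain hne => ⟨_, isOmegaCompleteBasis_sUnion hchain hne hc,
      fun _ => Set.subset_sUnion_of_mem⟩) ∅ isOmegaCompleteBasis_empty
  ⟨M, hM⟩

lemma exists_Ioo_inter_biInter_subset_compl {M : Set ι} (hM : Maximal (IsOmegaCompleteBasis A) M)
    {ξ : ι} (hξ : ξ ∉ M) :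
    ∃ (x : Finset M) (p q : ℚ), p < q ∧ Set.Ioo p q ∩ ⋂ η ∈ x, A η ⊆ (A ξ)ᶜ := by
  classical
  have hins : ¬ IsOmegaCompleteBasis A (insert ξ M) := fun h =>
    hξ (hM.2 h (Set.subset_insert ξ M) (Set.mem_insert ξ M))
  simp only [IsOmegaCompleteBasis, DenseIn, not_forall, not_exists, not_and, not_lt] at hins
  obtain ⟨x, hx, p, q, hpq, hfail⟩ := hins
  refine ⟨x.subtype (· ∈ M), p, q, hpq, fun r ⟨⟨hpr, hrq⟩, hr⟩ hrξ => ?_⟩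
  refine (hfail r (Set.mem_iInter₂.2 fun η hη => ?_) hpr).not_gt hrq
  rcases hx hη with rfl | hηM
  · exact hrξ
  · exact Set.mem_iInter₂.1 hr ⟨η, hηM⟩ (Finset.mem_subtype.2 hη)

end OmegaCompleteBasis

theorem exists_isOmegaCompleteBasis_or_nonempty_orderEmbedding {ι : Type*}
    (hcof : ℵ₀ < (#ι).ord.cof) (A : ι → Set ℚ) :
    (∃ X : Set ι, #X = (#ι).ord.cof ∧ IsOmegaCompleteBasis A X) ∨
      ∃ Y : Set ι, #Y = #ι ∧ Nonempty (ℚ ↪o ↥(⋂ ξ ∈ Y, (A ξ)ᶜ)) := by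
  have hι : ℵ₀ ≤ #ι := hcof.le.trans (cof_ord_le _)
  have : Infinite ι := infinite_iff.2 hι
  by_cases hlarge : ∃ X, IsOmegaCompleteBasis A X ∧ (#ι).ord.cof ≤ #X
  · obtain ⟨X, hX, hle⟩ := hlarge
    obtain ⟨Y, hYX, hY⟩ := le_mk_iff_exists_subset.1 hle
    exact Or.inl ⟨Y, hY, hX.mono hYX⟩
  push Not at hlarge
  obtain ⟨M, hM⟩ := exists_maximal_isOmegaCompleteBasis A
  have hMcof : #M < (#ι).ord.cof := hlarge M hM.1
  have hMc : #(Mᶜ : Set ι) = #ι := mk_compl_of_infinite M (hMcof.trans_le (cof_ord_le _))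
  choose x p q hpq hsub using fun ξ : (Mᶜ : Set ι) => exists_Ioo_inter_biInter_subset_compl hM ξ.2
  -- `ULift`: the pigeonhole principle wants the labels in the universe of `ι`.
  have hlabels : #(Finset M × ULift (ℚ × ℚ)) < (#ι).ord.cof := by
    rw [mk_prod, Cardinal.lift_id, Cardinal.lift_id]
    exact mul_lt_of_lt hcof.le ((mk_finset_le_max M).trans_lt (max_lt hcof hMcof))
      (mk_le_aleph0.trans_lt hcof)
  obtain ⟨⟨x₀, p₀, q₀⟩, Y, _, hY, hconst⟩ := infinite_pigeonhole_set
    (fun ξ => (x ξ, ULift.up (p ξ, q ξ))) (#ι) hMc.ge hι hlabels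
  simp only [Prod.mk.injEq, ULift.up.injEq] at hconst
  obtain ⟨ξ₀, hξ₀⟩ := (Set.infinite_coe_iff.1 (infinite_iff.2 (hι.trans hY))).nonempty
  refine Or.inr ⟨Y, le_antisymm (mk_set_le Y) hY, ?_⟩
  obtain ⟨-, hp, hq⟩ := hconst hξ₀
  refine (hM.1.denseIn_biInter x₀).nonempty_orderEmbedding (hp ▸ hq ▸ hpq _) fun r hr =>
    Set.mem_iInter₂.2 fun ξ hξ => ?_
  obtain ⟨hx, hp, hq⟩ := hconst hξ
  exact hsub _ (by rw [hx, hp, hq]; exact hr)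

/-- For any cardinal `κ` of uncountable cofinality and any family `(A ξ)` of subsets of
`ℚ` indexed by the ordinals below the initial ordinal of `κ`, either some subfamily of
size `cf κ` is an `ω`-complete `ℚ`-basis, or there is a subfamily of size `κ` of the
complements whose intersection contains a copy of `ℚ`. -/
theorem stmt_13 (κ : Cardinal) (hcof : ℵ₀ < κ.ord.cof)
    (A : κ.ord.ToType → Set ℚ) :
    (∃ X : Set κ.ord.ToType, #X = κ.ord.cof ∧
      ∀ x : Finset κ.ord.ToType, ↑x ⊆ X → DenseIn (⋂ ξ ∈ x, A ξ)) ∨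
    (∃ Y : Set κ.ord.ToType, #Y = κ ∧
      Nonempty (ℚ ↪o ↥(⋂ ξ ∈ Y, (A ξ)ᶜ))) := by
  have hK : #κ.ord.ToType = κ := by rw [mk_toType, card_ord]
  rw [← hK] at hcof
  simpa only [hK, IsOmegaCompleteBasis] using
    exists_isOmegaCompleteBasis_or_nonempty_orderEmbedding hcof A
end
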